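/- arXiv:1209.6064 — 5 statements merged into one kernel-verified Lean document; each statement's English description precedes it below -/
import Mathlib

section
/- Let $n \geq 1$ be an integer, let $a < 0 < b$ be real numbers (more generally $0 \in [a,b]$), and let $g \in C^{\infty}([a,b])$. Suppose there is a constant $C > 0$ such that for all $x \in [a,b]$ with $x \neq 0$, $|g^{(n)}(x)| \leq C \sum_{k=0}^{n-1} \frac{|g^{(k)}(x)|}{|x|^{n-k}}$. If $g^{(k)}(0) = 0$ for every integer $k \geq 0$, then $g \equiv 0$ on $[a,b]$. -/
set_option maxHeartbeats 2000000

open Set Finset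

/-- **Flatness implies vanishing under a singular differential inequality.**
If `g` is smooth on `[a, b]` with `0 ∈ [a, b]`, satisfies
`|g⁽ⁿ⁾(x)| ≤ C ∑_{k<n} |g⁽ᵏ⁾(x)| / |x|^(n-k)` for `x ≠ 0`, and all derivatives of `g`
vanish at `0`, then `g ≡ 0` on `[a, b]`. -/
theorem flat_vanishing_of_singular_inequality
    (n : ℕ) (hn : 1 ≤ n) (a b : ℝ) (ha : a ≤ 0) (hb : 0 ≤ b)
    (g : ℝ → ℝ) (hg : ContDiffOn ℝ (⊤ : ℕ∞) g (Set.Icc a b))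
    (C : ℝ) (hC : 0 < C)
    (hineq : ∀ x ∈ Set.Icc a b, x ≠ 0 →
      |iteratedDerivWithin n g (Set.Icc a b) x| ≤
        C * ∑ k ∈ Finset.range n,
          |iteratedDerivWithin k g (Set.Icc a b) x| / |x| ^ (n - k))
    (hflat : ∀ k : ℕ, iteratedDerivWithin k g (Set.Icc a b) 0 = 0) :
    ∀ x ∈ Set.Icc a b, g x = 0 := by
  intro x₀ hx₀
  rcases eq_or_ne x₀ 0 with rfl | hx0
  · have h := hflat 0
    rwa [iteratedDerivWithin_zero] at h
  set s : Set ℝ := Set.Icc a b with hs_def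
  have hab : a < b := by
    rcases lt_or_gt_of_ne hx0 with h | h
    · exact lt_of_lt_of_le (lt_of_le_of_lt hx₀.1 h) hb
    · exact lt_of_le_of_lt ha (lt_of_lt_of_le h hx₀.2)
  have hs : UniqueDiffOn ℝ s := uniqueDiffOn_Icc hab
  set d : ℕ → ℝ → ℝ := fun k => iteratedDerivWithin k g s with hd_def
  have hdiff : ∀ k : ℕ, DifferentiableOn ℝ (d k) s := fun k =>
    hg.differentiableOn_iteratedDerivWithin (by exact_mod_cast ENat.coe_lt_top k) hs
  have hcont : ∀ k : ℕ, ContinuousOn (d k) s := fun k => (hdiff k).continuousOn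
  have hder : ∀ k : ℕ, ∀ x ∈ s, HasDerivWithinAt (d k) (d (k + 1) x) s x := by
    intro k x hx
    have h1 := (hdiff k x hx).hasDerivWithinAt
    have h2 : d (k + 1) x = derivWithin (d k) s x := congrFun iteratedDerivWithin_succ x
    rwa [h2]
  have hdg : d 0 = g := iteratedDerivWithin_zero
  have hflat' : ∀ k : ℕ, d k 0 = 0 := hflat
  have hineq' : ∀ x ∈ s, x ≠ 0 →
      |d n x| ≤ C * ∑ k ∈ Finset.range n, |d k x| / |x| ^ (n - k) := hineq
  clear_value d
  clear hineq hflat hg hdiff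
  -- constants
  set K : ℕ := n + n * ⌈C⌉₊ with hK_def
  have hKC : (n : ℝ) * C + n ≤ K := by
    have h1 : C ≤ (⌈C⌉₊ : ℝ) := Nat.le_ceil C
    have h2 : (n : ℝ) * C ≤ (n : ℝ) * ⌈C⌉₊ := by
      apply mul_le_mul_of_nonneg_left h1 (by positivity)
    rw [hK_def]
    push_cast
    nlinarith
  have hnK : n ≤ K := by simp [hK_def]
  clear_value K
  set N : ℕ := K + 1 with hN_def
  clear_value N
  obtain ⟨D₀, hD₀⟩ := isCompact_Icc.exists_bound_of_continuousOn (hcont (N + 1))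
  set D : ℝ := max D₀ 0 with hD_def
  have hD0 : 0 ≤ D := le_max_right _ _
  have hD : ∀ x ∈ s, |d (N + 1) x| ≤ D := fun x hx =>
    le_trans (hD₀ x hx) (le_max_left _ _)
  clear_value D
  have h0s : (0 : ℝ) ∈ s := ⟨ha, hb⟩
  -- decay of derivatives near 0 from flatness
  have hdecay : ∀ j k : ℕ, k + j = N + 1 → ∀ x ∈ s, |d k x| ≤ D * |x| ^ j := by
    intro j
    induction j with
    | zero =>
      intro k hk x hx
      have : k = N + 1 := by omega
      subst this
      simpa using hD x hx
    | succ j ih =>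
      intro k hk x hx
      have hk' : (k + 1) + j = N + 1 := by omega
      have hsub : uIcc 0 x ⊆ s := by
        have : uIcc (0:ℝ) x = Icc (0 ⊓ x) (0 ⊔ x) := rfl
        rw [this]
        exact Icc_subset_Icc (le_inf ha hx.1) (sup_le hb hx.2)
      have habs : ∀ t ∈ uIcc (0:ℝ) x, |t| ≤ |x| := by
        intro t ht
        rw [Set.mem_uIcc] at ht
        rcases ht with ⟨h1, h2⟩ | ⟨h1, h2⟩
        · rw [abs_of_nonneg h1]; exact le_trans h2 (le_abs_self x)
        · rw [abs_of_nonpos h2]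
          exact le_trans (neg_le_neg h1) (neg_le_abs x)
      have key : |d k x - d k 0| ≤ (D * |x| ^ j) * |x - 0| := by
        apply Convex.norm_image_sub_le_of_norm_hasDerivWithin_le
          (f' := fun t => d (k + 1) t)
          (fun t ht => (hder k t (hsub ht)).mono hsub)
          ?_ (convex_uIcc 0 x) (left_mem_uIcc) (right_mem_uIcc)
        intro t ht
        have h1 := ih (k + 1) hk' t (hsub ht)
        have h2 : |t| ^ j ≤ |x| ^ j := pow_le_pow_left₀ (abs_nonneg t) (habs t ht) j
        calc ‖d (k + 1) t‖ = |d (k + 1) t| := rfl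
          _ ≤ D * |t| ^ j := h1
          _ ≤ D * |x| ^ j := mul_le_mul_of_nonneg_left h2 hD0
      have hdk0 : d k 0 = 0 := hflat' k
      rw [hdk0, sub_zero, sub_zero] at key
      calc |d k x| ≤ D * |x| ^ j * |x| := key
        _ = D * |x| ^ (j + 1) := by rw [pow_succ, mul_assoc]
  -- sign and radius
  set σ : ℝ := if 0 < x₀ then 1 else -1 with hσ_def
  set r : ℝ := |x₀| with hr_def
  have hr : 0 < r := abs_pos.2 hx0
  have hσr : σ * r = x₀ := by
    rcases lt_or_gt_of_ne hx0 with h | h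
    · simp only [hσ_def, hr_def, if_neg (not_lt.2 h.le), abs_of_neg h]; ring
    · simp only [hσ_def, hr_def, if_pos h, abs_of_pos h]; ring
  have hσabs : |σ| = 1 := by
    rcases lt_or_gt_of_ne hx0 with h | h
    · simp [hσ_def, not_lt.2 h.le]
    · simp [hσ_def, h]
  have habsσ : ∀ t : ℝ, 0 ≤ t → |σ * t| = t := by
    intro t ht; rw [abs_mul, hσabs, one_mul, abs_of_nonneg ht]
  have hmem : ∀ t : ℝ, 0 < t → t ≤ r → σ * t ∈ s := by
    intro t ht htr
    rcases lt_or_gt_of_ne hx0 with h | h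
    · have hσ : σ = -1 := by simp [hσ_def, not_lt.2 h.le]
      have hrx : r = -x₀ := abs_of_neg h
      constructor
      · rw [hσ]; nlinarith [hx₀.1]
      · rw [hσ]; nlinarith
    · have hσ : σ = 1 := by simp [hσ_def, h]
      have hrx : r = x₀ := abs_of_pos h
      constructor
      · rw [hσ]; nlinarith
      · rw [hσ]; nlinarith [hx₀.2]
  have hne : ∀ t : ℝ, 0 < t → σ * t ≠ 0 := by
    intro t ht h
    have := habsσ t ht.le
    rw [h, abs_zero] at this
    exact absurd this.symm (ne_of_gt ht)
  clear_value σ r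
  -- the vector function and its derivative
  haveI : NeZero n := ⟨by omega⟩
  set V : ℝ → Fin n → ℝ := fun x k => d k x * x ^ (k : ℕ) with hV_def
  set W : ℝ → Fin n → ℝ := fun x k =>
    d ((k : ℕ) + 1) x * x ^ (k : ℕ) + d k x * (((k : ℕ) : ℝ) * x ^ ((k : ℕ) - 1)) with hW_def
  set f : ℝ → Fin n → ℝ := fun t => V (σ * t) with hf_def
  set fd : ℝ → Fin n → ℝ := fun t k => W (σ * t) k * σ with hfd_def
  clear_value V W f fd
  -- key pointwise bound
  have hKey : ∀ t : ℝ, 0 < t → t ≤ r → ‖fd t‖ * t ≤ (K : ℝ) * ‖f t‖ := by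
    intro t ht htr
    set x : ℝ := σ * t with hx_def
    have hxs : x ∈ s := hmem t ht htr
    have hxt : |x| = t := habsσ t ht.le
    have hxne : x ≠ 0 := hne t ht
    have hcomp : ∀ j : ℕ, j < n → |d j x| * t ^ j ≤ ‖f t‖ := by
      intro j hj
      have h1 : ‖f t ⟨j, hj⟩‖ ≤ ‖f t‖ := norm_le_pi_norm (f t) ⟨j, hj⟩
      have h2 : ‖f t ⟨j, hj⟩‖ = |d j x| * t ^ j := by
        simp only [hf_def, hV_def, Real.norm_eq_abs, abs_mul, abs_pow, ← hx_def, hxt]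
      rwa [h2] at h1
    have hsum : ∑ j ∈ Finset.range n, |d j x| * t ^ j ≤ (n : ℝ) * ‖f t‖ := by
      calc ∑ j ∈ Finset.range n, |d j x| * t ^ j
          ≤ ∑ j ∈ Finset.range n, ‖f t‖ :=
            Finset.sum_le_sum fun j hj => hcomp j (Finset.mem_range.1 hj)
        _ = (n : ℝ) * ‖f t‖ := by rw [Finset.sum_const, Finset.card_range, nsmul_eq_mul]
    have htop : |d n x| * t ^ n ≤ C * ((n : ℝ) * ‖f t‖) := by
      have h1 := hineq' x hxs hxne
      have h2 : |d n x| * t ^ n ≤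
          (C * ∑ j ∈ Finset.range n, |d j x| / |x| ^ (n - j)) * t ^ n :=
        mul_le_mul_of_nonneg_right h1 (by positivity)
      have h3 : (∑ j ∈ Finset.range n, |d j x| / |x| ^ (n - j)) * t ^ n
          = ∑ j ∈ Finset.range n, |d j x| * t ^ j := by
        rw [Finset.sum_mul]
        apply Finset.sum_congr rfl
        intro j hj
        have hjn : j ≤ n := (Finset.mem_range.1 hj).le
        have htne : (t : ℝ) ≠ 0 := ne_of_gt ht
        rw [hxt]
        rw [div_mul_eq_mul_div, ← pow_sub_mul_pow t hjn,
          mul_comm (t ^ (n - j)) (t ^ j), ← mul_assoc, mul_div_assoc,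
          div_self (by positivity : t ^ (n - j) ≠ (0:ℝ)), mul_one]
      calc |d n x| * t ^ n ≤ C * ((∑ j ∈ Finset.range n, |d j x| / |x| ^ (n - j)) * t ^ n) := by
            rw [← mul_assoc]; exact h2
        _ = C * ∑ j ∈ Finset.range n, |d j x| * t ^ j := by rw [h3]
        _ ≤ C * ((n : ℝ) * ‖f t‖) := mul_le_mul_of_nonneg_left hsum hC.le
    -- componentwise
    have hF : 0 ≤ ‖f t‖ := norm_nonneg _
    have hcomp' : ∀ k : Fin n, ‖fd t k‖ * t ≤ (K : ℝ) * ‖f t‖ := by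
      intro k
      have hk1 : ‖fd t k‖ = |W x k| := by
        simp only [hfd_def, Real.norm_eq_abs, abs_mul, hσabs, mul_one, ← hx_def]
      have hterm2 : |d k x * (((k : ℕ) : ℝ) * x ^ ((k : ℕ) - 1))| * t ≤ ((k : ℕ) : ℝ) * ‖f t‖ := by
        rcases Nat.eq_zero_or_pos (k : ℕ) with hk0 | hk0
        · simp [hk0]
        · have hpow : t ^ ((k : ℕ) - 1) * t = t ^ (k : ℕ) := by
            rw [← pow_succ, Nat.sub_add_cancel hk0]
          have heq : |d k x * (((k : ℕ) : ℝ) * x ^ ((k : ℕ) - 1))| * t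
              = ((k : ℕ) : ℝ) * (|d k x| * (t ^ ((k : ℕ) - 1) * t)) := by
            rw [abs_mul, abs_mul, abs_pow, hxt, Nat.abs_cast]
            ring
          rw [heq, hpow]
          exact mul_le_mul_of_nonneg_left (hcomp (k : ℕ) k.2) (by positivity)
      have hterm1 : |d ((k : ℕ) + 1) x * x ^ (k : ℕ)| * t ≤ (C * (n : ℝ) + 1) * ‖f t‖ := by
        have heq : |d ((k : ℕ) + 1) x * x ^ (k : ℕ)| * t = |d ((k : ℕ) + 1) x| * t ^ ((k : ℕ) + 1) := by
          rw [abs_mul, abs_pow, hxt, pow_succ, mul_assoc]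
        rw [heq]
        rcases (show (k : ℕ) + 1 < n ∨ (k : ℕ) + 1 = n by omega) with hlt | heqn
        · have h6 : 0 ≤ C * (n : ℝ) * ‖f t‖ := by positivity
          calc |d ((k : ℕ) + 1) x| * t ^ ((k : ℕ) + 1) ≤ ‖f t‖ := hcomp _ hlt
            _ ≤ (C * (n : ℝ) + 1) * ‖f t‖ := by nlinarith
        · rw [heqn]
          calc |d n x| * t ^ n ≤ C * ((n : ℝ) * ‖f t‖) := htop
            _ ≤ (C * (n : ℝ) + 1) * ‖f t‖ := by nlinarith
      calc ‖fd t k‖ * t = |W x k| * t := by rw [hk1]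
        _ ≤ (|d ((k : ℕ) + 1) x * x ^ (k : ℕ)| + |d k x * (((k : ℕ) : ℝ) * x ^ ((k : ℕ) - 1))|) * t := by
            simp only [hW_def]
            apply mul_le_mul_of_nonneg_right (abs_add_le _ _) ht.le
        _ = |d ((k : ℕ) + 1) x * x ^ (k : ℕ)| * t + |d k x * (((k : ℕ) : ℝ) * x ^ ((k : ℕ) - 1))| * t := by
            ring
        _ ≤ (C * (n : ℝ) + 1) * ‖f t‖ + ((k : ℕ) : ℝ) * ‖f t‖ := add_le_add hterm1 hterm2
        _ ≤ (K : ℝ) * ‖f t‖ := by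
            have hkn : ((k : ℕ) : ℝ) + 1 ≤ (n : ℝ) := by exact_mod_cast k.2
            have h5 : C * (n : ℝ) + 1 + ((k : ℕ) : ℝ) ≤ (K : ℝ) := by linarith [hKC, hkn]
            have h6 := mul_le_mul_of_nonneg_right h5 hF
            nlinarith [h6]
    -- combine
    have h4 : ‖fd t‖ ≤ (K : ℝ) * ‖f t‖ / t := by
      apply (pi_norm_le_iff_of_nonneg (by positivity)).2
      intro k
      rw [le_div_iff₀ ht]
      exact hcomp' k
    calc ‖fd t‖ * t ≤ ((K : ℝ) * ‖f t‖ / t) * t := mul_le_mul_of_nonneg_right h4 ht.le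
      _ = (K : ℝ) * ‖f t‖ := by field_simp
  -- derivative of f on [ε, r]
  have hfder : ∀ ε : ℝ, 0 < ε → ∀ t ∈ Set.Ico ε r, HasDerivWithinAt f (fd t) (Set.Ici t) t := by
    intro ε hε t htm
    obtain ⟨htε, htr⟩ := htm
    have ht : 0 < t := lt_of_lt_of_le hε htε
    have hxs : σ * t ∈ s := hmem t ht htr.le
    have hVd : ∀ k : Fin n,
        HasDerivWithinAt (fun y => d (k : ℕ) y * y ^ (k : ℕ)) (W (σ * t) k) s (σ * t) := by
      intro k
      have h1 := (hder (k : ℕ) (σ * t) hxs).mul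
        ((hasDerivAt_pow (k : ℕ) (σ * t)).hasDerivWithinAt)
      simpa [hW_def, Pi.mul_def] using h1
    have hmap : Set.MapsTo (fun u : ℝ => σ * u) (Set.Icc ε r) s := fun u hu =>
      hmem u (lt_of_lt_of_le hε hu.1) hu.2
    have hinner : HasDerivWithinAt (fun u : ℝ => σ * u) σ (Set.Icc ε r) t := by
      simpa using ((hasDerivAt_id t).const_mul σ).hasDerivWithinAt
    have hcompd : HasDerivWithinAt f (fd t) (Set.Icc ε r) t := by
      apply hasDerivWithinAt_pi.2
      intro k
      have h2 := HasDerivWithinAt.comp (t : ℝ) (hVd k) hinner hmap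
      simp only [hf_def, hV_def, hfd_def, Function.comp] at h2 ⊢
      exact h2
    have hmem2 : Set.Icc ε r ∈ nhdsWithin t (Set.Ici t) := by
      have h5 : Set.Iio r ∈ nhds t := Iio_mem_nhds htr
      have h6 := Filter.inter_mem (mem_nhdsWithin_of_mem_nhds h5)
        (self_mem_nhdsWithin : Set.Ici t ∈ nhdsWithin t (Set.Ici t))
      exact Filter.mem_of_superset h6 fun u hu => ⟨le_trans htε hu.2, hu.1.le⟩
    exact hcompd.mono_of_mem_nhdsWithin hmem2
  -- continuity of f on [ε, r]
  have hfcont : ∀ ε : ℝ, 0 < ε → ContinuousOn f (Set.Icc ε r) := by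
    intro ε hε
    have hmap : Set.MapsTo (fun u : ℝ => σ * u) (Set.Icc ε r) s := fun u hu =>
      hmem u (lt_of_lt_of_le hε hu.1) hu.2
    apply continuousOn_pi.2
    intro k
    have h1 : ContinuousOn (fun u : ℝ => d (k : ℕ) (σ * u) * (σ * u) ^ (k : ℕ))
        (Set.Icc ε r) := by
      apply ContinuousOn.mul
      · exact (hcont (k : ℕ)).comp (by fun_prop) hmap
      · fun_prop
    simpa [hf_def, hV_def] using h1
  have haux : ∀ u v : ℝ, (∀ η : ℝ, 0 < η → u ≤ v + η) → u ≤ v := fun u v h =>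
    le_of_forall_sub_le fun η hη => by linarith [h η hη]
  -- Gronwall estimate
  have hmain : ∀ ε : ℝ, 0 < ε → ε < r → ‖f r‖ ≤ (D * r ^ N) * ε := by
    intro ε hε hεr
    have hεN : (0:ℝ) < ε ^ N := by positivity
    have hgron : ∀ η : ℝ, 0 < η → ‖f r‖ ≤ (‖f ε‖ + η) / ε ^ N * r ^ N := by
      intro η hη
      set c : ℝ := (‖f ε‖ + η) / ε ^ N with hc_def
      have hc : 0 < c := div_pos (by positivity) hεN
      have hN1 : 1 ≤ N := by omega
      have happ := image_norm_le_of_norm_deriv_right_lt_deriv_boundary'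
        (f := f) (f' := fd) (a := ε) (b := r)
        (B := fun u => c * u ^ N) (B' := fun u => c * ((N : ℝ) * u ^ (N - 1)))
        (hfcont ε hε) (hfder ε hε)
        (by show ‖f ε‖ ≤ c * ε ^ N
            rw [hc_def, div_mul_cancel₀ _ (ne_of_gt hεN)]; linarith)
        (by fun_prop)
        (fun u _ => ((hasDerivAt_pow N u).const_mul c).hasDerivWithinAt)
        ?_
      · have h8 := happ (Set.right_mem_Icc.2 hεr.le)
        calc ‖f r‖ ≤ c * r ^ N := h8
          _ = (‖f ε‖ + η) / ε ^ N * r ^ N := by rw [hc_def]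
      · intro u hu hyp
        show ‖fd u‖ < c * ((N : ℝ) * u ^ (N - 1))
        have hyp' : ‖f u‖ = c * u ^ N := hyp
        have hu0 : 0 < u := lt_of_lt_of_le hε hu.1
        have h9 := hKey u hu0 hu.2.le
        rw [hyp'] at h9
        have hKN : (K : ℝ) < (N : ℝ) := by exact_mod_cast (by omega : K < N)
        have hupow : u ^ N = u ^ (N - 1) * u := by
          conv_lhs => rw [show N = (N - 1) + 1 by omega]
          rw [pow_succ]
        rw [hupow] at h9
        have h9' : ‖fd u‖ * u ≤ ((K : ℝ) * c * u ^ (N - 1)) * u := by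
          calc ‖fd u‖ * u ≤ (K : ℝ) * (c * (u ^ (N - 1) * u)) := h9
            _ = ((K : ℝ) * c * u ^ (N - 1)) * u := by ring
        have h10 : ‖fd u‖ ≤ (K : ℝ) * c * u ^ (N - 1) := le_of_mul_le_mul_right h9' hu0
        have hup : (0:ℝ) < u ^ (N - 1) := by positivity
        calc ‖fd u‖ ≤ (K : ℝ) * c * u ^ (N - 1) := h10
          _ < c * ((N : ℝ) * u ^ (N - 1)) := by nlinarith [mul_pos hc hup, hKN]
    have h11 : ‖f r‖ ≤ ‖f ε‖ / ε ^ N * r ^ N := by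
      apply haux
      intro η hη
      have hrN : (0:ℝ) < r ^ N := by positivity
      have h12 := hgron (η * ε ^ N / r ^ N) (by positivity)
      calc ‖f r‖ ≤ (‖f ε‖ + η * ε ^ N / r ^ N) / ε ^ N * r ^ N := h12
        _ = ‖f ε‖ / ε ^ N * r ^ N + η := by field_simp
    have hδ : ‖f ε‖ ≤ D * ε ^ (N + 1) := by
      apply (pi_norm_le_iff_of_nonneg (by positivity)).2
      intro k
      have hk2 := k.2
      have hkN : (k : ℕ) ≤ N + 1 := by omega
      have hks : σ * ε ∈ s := hmem ε hε hεr.le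
      have h12 := hdecay (N + 1 - (k : ℕ)) (k : ℕ) (by omega) (σ * ε) hks
      rw [habsσ ε hε.le] at h12
      have h13 : ‖f ε k‖ = |d (k : ℕ) (σ * ε)| * ε ^ (k : ℕ) := by
        simp only [hf_def, hV_def, Real.norm_eq_abs, abs_mul, abs_pow, habsσ ε hε.le]
      rw [h13]
      calc |d (k : ℕ) (σ * ε)| * ε ^ (k : ℕ)
          ≤ (D * ε ^ (N + 1 - (k : ℕ))) * ε ^ (k : ℕ) := by
            apply mul_le_mul_of_nonneg_right h12 (by positivity)
        _ = D * ε ^ (N + 1) := by rw [mul_assoc, pow_sub_mul_pow ε hkN]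
    calc ‖f r‖ ≤ ‖f ε‖ / ε ^ N * r ^ N := h11
      _ ≤ (D * ε ^ (N + 1)) / ε ^ N * r ^ N := by gcongr
      _ = (D * r ^ N) * ε := by
          rw [pow_succ]
          field_simp
  -- conclusion
  have hfr0 : ‖f r‖ ≤ 0 := by
    apply haux
    intro η hη
    have hDr : (0:ℝ) ≤ D * r ^ N := by positivity
    set ε : ℝ := min (r / 2) (η / (D * r ^ N + 1)) with hε_def
    have hε : 0 < ε := lt_min (by linarith) (by positivity)
    have hεr : ε < r := lt_of_le_of_lt (min_le_left _ _) (by linarith)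
    have h14 := hmain ε hε hεr
    have h16 : ε ≤ η / (D * r ^ N + 1) := min_le_right _ _
    have h15 : (D * r ^ N) * ε ≤ η := by
      calc (D * r ^ N) * ε ≤ (D * r ^ N) * (η / (D * r ^ N + 1)) :=
            mul_le_mul_of_nonneg_left h16 hDr
        _ ≤ η := by
            have h20 : (0:ℝ) < D * r ^ N + 1 := by positivity
            rw [← mul_div_assoc, div_le_iff₀ h20]
            nlinarith
    linarith
  have hfr : f r = 0 := norm_le_zero_iff.1 hfr0
  have h18 : f r ⟨0, by omega⟩ = 0 := by rw [hfr]; rfl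
  have h19 : f r ⟨0, by omega⟩ = g x₀ := by
    simp only [hf_def, hV_def, hσr, pow_zero, mul_one, hdg]
  rw [← h19, h18]
end

section
/- Let $n \geq 1$ and $m \geq n$ be integers, let $f : \mathbb{R} \to \mathbb{R}$ be any function, and suppose $u, v \in C^{\infty}([0,1))$ both satisfy the differential equation $w^{(n)}(t) = f(w(t))$ for all $t \in [0,1)$ together with the initial conditions $w(0) = w'(0) = \cdots = w^{(m-1)}(0) = 0$ and $w^{(m)}(0) = a$ for the same real number $a \neq 0$. Then $u^{(k)}(0) = v^{(k)}(0)$ for every integer $k \geq 0$; that is, the derivatives of a solution at $0$ of all orders are determined by $m$, $n$, and $f$. -/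
set_option maxHeartbeats 1000000
open Set Filter Topology Finset
open Set Filter Topology Finset

noncomputable section
namespace OdeDet

local notation "S" => Set.Ico (0:ℝ) 1
local notation "L" => nhdsWithin (0:ℝ) (Set.Ioi (0:ℝ))

lemma uS : UniqueDiffOn ℝ S := uniqueDiffOn_Ico 0 1

lemma zero_mem_S : (0:ℝ) ∈ S := ⟨le_refl 0, zero_lt_one⟩

lemma ioo_sub : Set.Ioo (0:ℝ) 1 ⊆ S := Set.Ioo_subset_Ico_self

lemma S_mem_nhds {x : ℝ} (hx : x ∈ Set.Ioo (0:ℝ) 1) : S ∈ 𝓝 x :=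
  Filter.mem_of_superset (isOpen_Ioo.mem_nhds hx) ioo_sub

lemma diffAt {g : ℝ → ℝ} (hg : ContDiffOn ℝ (⊤ : ℕ∞) g S) {x : ℝ} (hx : x ∈ Set.Ioo (0:ℝ) 1) :
    DifferentiableAt ℝ g x :=
  ((hg x (ioo_sub hx)).contDiffAt (S_mem_nhds hx)).differentiableAt (by simp)

lemma deriv_eqW {g : ℝ → ℝ} {x : ℝ} (hx : x ∈ Set.Ioo (0:ℝ) 1) :
    derivWithin g S x = deriv g x :=
  derivWithin_of_mem_nhds (S_mem_nhds hx)

/-- MVT helper. -/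
lemma mvt {g : ℝ → ℝ} (hg : ContDiffOn ℝ (⊤ : ℕ∞) g S) {x y : ℝ} (hx : x ∈ Set.Ioo (0:ℝ) 1)
    (hy : y ∈ Set.Ioo (0:ℝ) 1) :
    ∃ ξ ∈ Set.uIcc x y, ξ ∈ Set.Ioo (0:ℝ) 1 ∧ g y - g x = deriv g ξ * (y - x) := by
  have main : ∀ x y : ℝ, x ∈ Set.Ioo (0:ℝ) 1 → y ∈ Set.Ioo (0:ℝ) 1 → x < y →
      ∃ ξ ∈ Set.uIcc x y, ξ ∈ Set.Ioo (0:ℝ) 1 ∧ g y - g x = deriv g ξ * (y - x) := by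
    intro x y hx hy hxy
    have hsub : Set.Icc x y ⊆ Set.Ioo (0:ℝ) 1 := fun z hz =>
      ⟨lt_of_lt_of_le hx.1 hz.1, lt_of_le_of_lt hz.2 hy.2⟩
    obtain ⟨c, hc, hder⟩ := exists_deriv_eq_slope g hxy
      (fun z hz => (diffAt hg (hsub hz)).continuousAt.continuousWithinAt)
      (fun z hz => (diffAt hg (hsub (Set.Ioo_subset_Icc_self hz))).differentiableWithinAt)
    refine ⟨c, ?_, hsub (Set.Ioo_subset_Icc_self hc), ?_⟩
    · rw [Set.uIcc_of_le hxy.le]; exact Set.Ioo_subset_Icc_self hc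
    · rw [hder]; field_simp [sub_ne_zero.mpr hxy.ne']
  rcases lt_trichotomy x y with h|h|h
  · exact main x y hx hy h
  · exact ⟨x, Set.left_mem_uIcc, hx, by simp [h]⟩
  · obtain ⟨ξ, h1, h2, h3⟩ := main y x hy hx h
    exact ⟨ξ, by rwa [Set.uIcc_comm], h2, by linarith⟩


lemma hasDerivAt_poly (c : ℕ → ℝ) (p : ℕ) (x : ℝ) :
    HasDerivAt (fun s : ℝ => ∑ j ∈ Finset.range (p+1), c j * s ^ j)
      (∑ j ∈ Finset.range p, c (j+1) * (j+1) * x ^ j) x := by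
  induction p with
  | zero =>
    have : (fun s : ℝ => ∑ j ∈ Finset.range (0+1), c j * s ^ j) = fun _ : ℝ => c 0 := by
      funext s; simp
    rw [this, Finset.range_zero, Finset.sum_empty]
    exact hasDerivAt_const x (c 0)
  | succ p IH =>
    have h1 : HasDerivAt (fun s : ℝ => c (p+1) * s ^ (p+1))
        (c (p+1) * ((p+1) * x ^ p)) x := by
      simpa using (hasDerivAt_pow (p+1) x).const_mul (c (p+1))
    have h2 := IH.add h1
    have e1 : (fun s : ℝ => (∑ j ∈ Finset.range (p+1), c j * s ^ j) + c (p+1) * s ^ (p+1))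
        = fun s : ℝ => ∑ j ∈ Finset.range (p+1+1), c j * s ^ j :=
      funext fun s => (Finset.sum_range_succ (fun j => c j * s ^ j) (p+1)).symm
    have e2 : (∑ j ∈ Finset.range p, c (j+1) * (j+1) * x ^ j) + c (p+1) * ((p+1) * x ^ p)
        = ∑ j ∈ Finset.range (p+1), c (j+1) * (j+1) * x ^ j := by
      rw [Finset.sum_range_succ]; push_cast; ring
    rw [e2] at h2; rw [← e1]
    exact h2

lemma taylor_bound {g : ℝ → ℝ} (hg : ContDiffOn ℝ (⊤ : ℕ∞) g S) (p : ℕ) :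
    ∀ ε > (0:ℝ), ∃ δ > (0:ℝ), δ ≤ 1 ∧ ∀ t : ℝ, 0 < t → t < δ →
      |g t - ∑ j ∈ Finset.range (p+1), iteratedDerivWithin j g S 0 / ((Nat.factorial j : ℕ) : ℝ) * t ^ j|
        ≤ ε * t ^ p := by
  induction p generalizing g with
  | zero =>
    intro ε hε
    have hc : ContinuousWithinAt g S 0 := (hg 0 zero_mem_S).continuousWithinAt
    rw [Metric.continuousWithinAt_iff] at hc
    obtain ⟨δ, hδ, hδ'⟩ := hc ε hε
    refine ⟨min δ 1, by positivity, min_le_right _ _, fun t ht ht' => ?_⟩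
    have htS : t ∈ S := ⟨ht.le, lt_of_lt_of_le ht' (min_le_right _ _)⟩
    have := hδ' htS (by
      rw [Real.dist_eq, sub_zero, abs_of_pos ht]
      exact lt_of_lt_of_le ht' (min_le_left _ _))
    rw [Real.dist_eq] at this
    simpa using this.le
  | succ p IH =>
    intro ε hε
    have hG : ContDiffOn ℝ (⊤ : ℕ∞) (derivWithin g S) S := hg.derivWithin uS (by simp)
    set G := derivWithin g S with hGdef
    obtain ⟨δ, hδpos, hδ1, hbd⟩ := IH hG ε hε
    refine ⟨δ, hδpos, hδ1, fun t ht htδ => ?_⟩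
    have ht1 : t < 1 := lt_of_lt_of_le htδ hδ1
    set c : ℕ → ℝ := fun j => iteratedDerivWithin j g S 0 with hcdef
    set Q : ℝ → ℝ := fun s => ∑ j ∈ Finset.range (p+2), c j / ((Nat.factorial j : ℕ) : ℝ) * s ^ j with hQ
    set h : ℝ → ℝ := fun s => g s - Q s with hh
    have hcG : ∀ j, iteratedDerivWithin j G S 0 = c (j+1) := fun j =>
      (congrFun iteratedDerivWithin_succ' 0).symm
    have hQd : ∀ x : ℝ, HasDerivAt Q (∑ j ∈ Finset.range (p+1), c (j+1) / ((Nat.factorial j : ℕ) : ℝ) * x ^ j) x := by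
      intro x
      have h1 := hasDerivAt_poly (fun j => c j / ((Nat.factorial j : ℕ) : ℝ)) (p+1) x
      have e : ∀ j ∈ Finset.range (p+1),
          c (j+1) / ((Nat.factorial (j+1) : ℕ) : ℝ) * ((j:ℝ)+1) * x ^ j = c (j+1) / ((Nat.factorial j : ℕ) : ℝ) * x ^ j := by
        intro j _
        have hf : ((Nat.factorial (j+1) : ℕ) : ℝ) = ((j:ℝ)+1) * ((Nat.factorial j : ℕ) : ℝ) := by
          rw [Nat.factorial_succ]; push_cast; ring
        rw [hf]
        have : ((j:ℝ)+1) ≠ 0 := by positivity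
        field_simp
      rw [← Finset.sum_congr rfl e]
      exact h1
    have hd : ∀ x ∈ Set.Ioo (0:ℝ) t,
        HasDerivAt h (G x - ∑ j ∈ Finset.range (p+1), c (j+1) / ((Nat.factorial j : ℕ) : ℝ) * x ^ j) x := by
      intro x hx
      have hx1 : x ∈ Set.Ioo (0:ℝ) 1 := ⟨hx.1, hx.2.trans ht1⟩
      have h1 : HasDerivAt g (G x) x := by
        have h2 := (diffAt hg hx1).hasDerivAt
        rwa [← deriv_eqW hx1] at h2
      exact h1.sub (hQd x)
    have h0 : h 0 = 0 := by
      have e : ∑ j ∈ Finset.range (p+2), c j / ((Nat.factorial j : ℕ) : ℝ) * (0:ℝ) ^ j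
          = c 0 / ((Nat.factorial 0 : ℕ) : ℝ) * (0:ℝ) ^ 0 :=
        Finset.sum_eq_single_of_mem 0 (by simp) (fun b _ hb => by simp [zero_pow hb])
      have hc0 : c 0 = g 0 := by rw [hcdef]; simp [iteratedDerivWithin_zero]
      simp [hh, hQ, e, hc0]
    have hcont : ContinuousOn h (Set.Icc 0 t) := by
      apply ContinuousOn.sub
      · exact hg.continuousOn.mono (fun z hz => ⟨hz.1, lt_of_le_of_lt hz.2 ht1⟩)
      · exact (Continuous.continuousOn (by fun_prop))
    obtain ⟨ξ, hξ, hslope⟩ := exists_deriv_eq_slope h ht hcont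
      (fun x hx => ((hd x hx).differentiableAt).differentiableWithinAt)
    have hder : deriv h ξ = G ξ - ∑ j ∈ Finset.range (p+1), c (j+1) / ((Nat.factorial j : ℕ) : ℝ) * ξ ^ j :=
      (hd ξ hξ).deriv
    have hbound : |deriv h ξ| ≤ ε * ξ ^ p := by
      rw [hder]
      have h2 := hbd ξ hξ.1 (hξ.2.trans htδ)
      simpa [hcG] using h2
    have hht : h t = deriv h ξ * t := by
      rw [hslope, h0, sub_zero, sub_zero]; field_simp
    have goal1 : |h t| ≤ ε * t ^ (p+1) := by
      rw [hht, abs_mul, abs_of_pos ht]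
      calc |deriv h ξ| * t ≤ (ε * ξ ^ p) * t := by
            apply mul_le_mul_of_nonneg_right hbound ht.le
        _ ≤ (ε * t ^ p) * t := by
            apply mul_le_mul_of_nonneg_right _ ht.le
            exact mul_le_mul_of_nonneg_left (pow_le_pow_left₀ hξ.1.le hξ.2.le p) hε.le
        _ = ε * t ^ (p+1) := by ring
    exact goal1


lemma taylor_tendsto {g : ℝ → ℝ} (hg : ContDiffOn ℝ (⊤ : ℕ∞) g S) (p : ℕ) :
    Filter.Tendsto (fun t : ℝ =>
      (g t - ∑ j ∈ Finset.range (p+1),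
        iteratedDerivWithin j g S 0 / ((Nat.factorial j : ℕ) : ℝ) * t ^ j) / t ^ p)
      L (nhds 0) := by
  rw [Metric.tendsto_nhds]
  intro ε hε
  obtain ⟨δ, hδpos, hδ1, hbd⟩ := taylor_bound hg p (ε/2) (by positivity)
  have hmem : Set.Ioo (0:ℝ) δ ∈ L := Ioo_mem_nhdsGT_of_mem ⟨le_refl 0, hδpos⟩
  filter_upwards [hmem] with t ht
  rw [Real.dist_eq, sub_zero, abs_div, abs_pow, abs_of_pos ht.1]
  have h2 := hbd t ht.1 ht.2
  have htp : (0:ℝ) < t ^ p := pow_pos ht.1 p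
  calc |g t - _| / t ^ p ≤ (ε/2 * t ^ p) / t ^ p :=
        div_le_div_of_nonneg_right h2 htp.le
    _ = ε/2 := by field_simp
    _ < ε := by linarith

/-- If the first `p` derivatives vanish at `0`, then `g t / t^p` tends to the `p`-th
Taylor coefficient. -/
lemma ratio_tendsto {g : ℝ → ℝ} (hg : ContDiffOn ℝ (⊤ : ℕ∞) g S) (p : ℕ)
    (h0 : ∀ j < p, iteratedDerivWithin j g S 0 = 0) :
    Filter.Tendsto (fun t : ℝ => g t / t ^ p) L
      (nhds (iteratedDerivWithin p g S 0 / ((Nat.factorial p : ℕ) : ℝ))) := by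
  set C := iteratedDerivWithin p g S 0 / ((Nat.factorial p : ℕ) : ℝ) with hC
  have hsum : ∀ t : ℝ, ∑ j ∈ Finset.range (p+1),
      iteratedDerivWithin j g S 0 / ((Nat.factorial j : ℕ) : ℝ) * t ^ j = C * t ^ p := by
    intro t
    rw [Finset.sum_eq_single_of_mem p (Finset.self_mem_range_succ p)]
    intro b hb hbp
    have : iteratedDerivWithin b g S 0 = 0 := h0 b (by
      rcases (Finset.mem_range_succ_iff.mp hb).lt_or_eq with h|h
      · exact h
      · exact absurd h hbp)
    simp [this]
  have h1 := (taylor_tendsto hg p).add_const C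
  rw [zero_add] at h1
  apply h1.congr'
  filter_upwards [self_mem_nhdsWithin] with t ht
  have ht : (0:ℝ) < t := ht
  have htp : t ^ p ≠ 0 := (pow_pos ht p).ne'
  rw [hsum t]
  field_simp; ring

/-- Two-function version. -/
lemma ratio_sub_tendsto {g h : ℝ → ℝ} (hg : ContDiffOn ℝ (⊤ : ℕ∞) g S) (hh : ContDiffOn ℝ (⊤ : ℕ∞) h S)
    (p : ℕ) (hagree : ∀ j < p, iteratedDerivWithin j g S 0 = iteratedDerivWithin j h S 0) :
    Filter.Tendsto (fun t : ℝ => (g t - h t) / t ^ p) L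
      (nhds ((iteratedDerivWithin p g S 0 - iteratedDerivWithin p h S 0)
        / ((Nat.factorial p : ℕ) : ℝ))) := by
  have hGH : ContDiffOn ℝ (⊤ : ℕ∞) (g - h) S := hg.sub hh
  have hiter : ∀ j : ℕ, iteratedDerivWithin j (g - h) S 0
      = iteratedDerivWithin j g S 0 - iteratedDerivWithin j h S 0 := fun j =>
    iteratedDerivWithin_sub zero_mem_S uS ((hg.of_le (by exact_mod_cast le_top)) 0 zero_mem_S) ((hh.of_le (by exact_mod_cast le_top)) 0 zero_mem_S)
  have h0 : ∀ j < p, iteratedDerivWithin j (g - h) S 0 = 0 := fun j hj => by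
    rw [hiter j, hagree j hj, sub_self]
  have := ratio_tendsto hGH p h0
  rw [hiter p] at this
  exact this


/-- Composition of iterated derivatives within `S`. -/
lemma iter_iter {g : ℝ → ℝ} (n j : ℕ) {x : ℝ} (hx : x ∈ S) :
    iteratedDerivWithin j (iteratedDerivWithin n g S) S x
      = iteratedDerivWithin (n + j) g S x := by
  induction j generalizing x with
  | zero => simp
  | succ j IH =>
    rw [iteratedDerivWithin_succ, ← Nat.add_assoc,
      iteratedDerivWithin_succ]
    apply derivWithin_congr
    · intro y hy; exact IH hy
    · exact IH hx

lemma descFactorial_strictmono {n a b : ℕ} (hn : 1 ≤ n) (hna : n ≤ a) (hab : a < b) :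
    Nat.descFactorial a n < Nat.descFactorial b n := by
  induction n with
  | zero => omega
  | succ k IH =>
    rcases Nat.eq_zero_or_pos k with hk|hk
    · subst hk; simpa [Nat.descFactorial] using hab
    · have h1 := IH hk (le_trans (Nat.le_succ k) hna)
      rw [Nat.descFactorial_succ, Nat.descFactorial_succ]
      have hbk : a - k < b - k := by omega
      have hpos : 0 < Nat.descFactorial a k := Nat.pos_of_ne_zero (fun h => by
        have := Nat.descFactorial_eq_zero_iff_lt.mp h; omega)
      calc (a - k) * a.descFactorial k < (b - k) * a.descFactorial k :=
            Nat.mul_lt_mul_of_lt_of_le hbk (le_refl _) hpos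
        _ ≤ (b - k) * b.descFactorial k := Nat.mul_le_mul_left _ h1.le
  
lemma fact_ineq {n k l : ℕ} (hn : 1 ≤ n) (hnk : n ≤ k) (hkl : k < l) :
    (Nat.factorial k) * (Nat.factorial (l - n)) < (Nat.factorial (k - n)) * (Nat.factorial l) := by
  have hk : (Nat.factorial (k-n)) * Nat.descFactorial k n = Nat.factorial k :=
    Nat.factorial_mul_descFactorial hnk
  have hl : (Nat.factorial (l-n)) * Nat.descFactorial l n = Nat.factorial l :=
    Nat.factorial_mul_descFactorial (le_trans hnk hkl.le)
  rw [← hk, ← hl]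
  have h := descFactorial_strictmono hn hnk hkl
  have hpos : 0 < Nat.factorial (k-n) := Nat.factorial_pos _
  have hpos2 : 0 < Nat.factorial (l-n) := Nat.factorial_pos _
  calc Nat.factorial (k-n) * k.descFactorial n * Nat.factorial (l-n)
      < Nat.factorial (k-n) * l.descFactorial n * Nat.factorial (l-n) := by
        apply Nat.mul_lt_mul_of_lt_of_le _ (le_refl _) hpos2
        exact Nat.mul_lt_mul_of_le_of_lt (le_refl _) h hpos
    _ = Nat.factorial (k-n) * (Nat.factorial (l-n) * l.descFactorial n) := by ring


lemma choose_fun {P : ℝ → ℝ → Prop} (h : ∀ᶠ t in L, ∃ s, P t s) :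
    ∃ g : ℝ → ℝ, ∀ᶠ t in L, P t (g t) := by
  classical
  refine ⟨fun t => if h : ∃ s, P t s then h.choose else 0, ?_⟩
  filter_upwards [h] with t ht
  simp only [dif_pos ht]
  exact ht.choose_spec

lemma contDiffOn_iter {g : ℝ → ℝ} (hg : ContDiffOn ℝ (⊤ : ℕ∞) g S) (k : ℕ) :
    ContDiffOn ℝ (⊤ : ℕ∞) (iteratedDerivWithin k g S) S := by
  induction k with
  | zero => simpa [iteratedDerivWithin_zero] using hg
  | succ k IH =>
    have h1 : ContDiffOn ℝ (⊤ : ℕ∞) (derivWithin (iteratedDerivWithin k g S) S) S :=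
      IH.derivWithin uS (by simp)
    exact h1.congr fun x hx => congrFun iteratedDerivWithin_succ x

lemma tendsto_self_L : Filter.Tendsto (fun t : ℝ => t) L (nhds 0) :=
  tendsto_id.mono_left nhdsWithin_le_nhds

lemma between_tendsto {φ ξ : ℝ → ℝ}
    (hφ1 : Filter.Tendsto (fun t => φ t / t) L (nhds 1))
    (hmem : ∀ᶠ t in L, ξ t ∈ Set.uIcc t (φ t)) :
    Filter.Tendsto ξ L (nhds 0) ∧ Filter.Tendsto (fun t => ξ t / t) L (nhds 1) := by
  have habs : ∀ᶠ t in L, |ξ t / t - 1| ≤ |φ t / t - 1| := by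
    filter_upwards [hmem, self_mem_nhdsWithin] with t hm ht
    have ht' : (0:ℝ) < t := ht
    have hb : |ξ t - t| ≤ |φ t - t| := by
      rcases Set.mem_uIcc.mp hm with ⟨h1, h2⟩ | ⟨h1, h2⟩
      · rw [abs_of_nonneg (by linarith), abs_of_nonneg (by linarith)]; linarith
      · rw [abs_of_nonpos (by linarith), abs_of_nonpos (by linarith)]; linarith
    have e1 : ξ t / t - 1 = (ξ t - t) / t := by field_simp
    have e2 : φ t / t - 1 = (φ t - t) / t := by field_simp
    rw [e1, e2, abs_div, abs_div]
    exact div_le_div_of_nonneg_right hb (abs_nonneg _)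
  have hg0 : Filter.Tendsto (fun t => |φ t / t - 1|) L (nhds 0) := by
    have h1 : Filter.Tendsto (fun t => φ t / t - 1) L (nhds 0) := by
      simpa using hφ1.sub_const 1
    exact (tendsto_zero_iff_abs_tendsto_zero _).mp h1
  have h0 : Filter.Tendsto (fun t => ξ t / t - 1) L (nhds 0) := by
    apply (tendsto_zero_iff_abs_tendsto_zero _).mpr
    exact tendsto_of_tendsto_of_tendsto_of_le_of_le' tendsto_const_nhds hg0
      (Filter.Eventually.of_forall fun t => abs_nonneg _) habs
  have hratio : Filter.Tendsto (fun t => ξ t / t) L (nhds 1) := by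
    have := h0.add_const 1
    rw [zero_add] at this
    apply this.congr
    intro t; ring
  refine ⟨?_, hratio⟩
  have h1 : Filter.Tendsto (fun t => (ξ t / t) * t) L (nhds (1 * 0)) :=
    hratio.mul tendsto_self_L
  rw [one_mul] at h1
  apply h1.congr'
  filter_upwards [self_mem_nhdsWithin] with t ht
  have : (t:ℝ) ≠ 0 := ne_of_gt ht
  field_simp


-- appended to g.lean for testing
lemma step
    (n m : ℕ) (hn : 1 ≤ n) (hm : n ≤ m) (f : ℝ → ℝ) (a : ℝ) (ha : a ≠ 0)
    (u v : ℝ → ℝ)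
    (hu : ContDiffOn ℝ (⊤ : ℕ∞) u S) (hv : ContDiffOn ℝ (⊤ : ℕ∞) v S)
    (hueq : ∀ t ∈ S, iteratedDerivWithin n u S t = f (u t))
    (hveq : ∀ t ∈ S, iteratedDerivWithin n v S t = f (v t))
    (hu0 : ∀ k < m, iteratedDerivWithin k u S 0 = 0)
    (hum : iteratedDerivWithin m u S 0 = a)
    (N : ℕ) (hN : m ≤ N)
    (IH : ∀ j ≤ N, iteratedDerivWithin j u S 0 = iteratedDerivWithin j v S 0) :
    iteratedDerivWithin (N+1) u S 0 = iteratedDerivWithin (N+1) v S 0 := by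
  have hm1 : 1 ≤ m := le_trans hn hm
  have hfm : ((Nat.factorial m : ℕ) : ℝ) ≠ 0 := Nat.cast_ne_zero.mpr (Nat.factorial_ne_zero m)
  set α : ℝ := a / ((Nat.factorial m : ℕ) : ℝ) with hαdef
  have hα : α ≠ 0 := div_ne_zero ha hfm
  -- basic limits
  have hu_lim : Filter.Tendsto (fun t : ℝ => u t / t ^ m) L (nhds α) := by
    have := ratio_tendsto hu m hu0
    rwa [hum] at this
  have hv0 : ∀ k < m, iteratedDerivWithin k v S 0 = 0 := fun k hk => by
    rw [← IH k (by omega)]; exact hu0 k hk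
  have hvm : iteratedDerivWithin m v S 0 = a := by rw [← IH m hN]; exact hum
  have hv_lim : Filter.Tendsto (fun t : ℝ => v t / t ^ m) L (nhds α) := by
    have := ratio_tendsto hv m hv0
    rwa [hvm] at this
  -- scaled limits
  have tendsto_mul_L : ∀ c : ℝ, 0 < c → Filter.Tendsto (fun t : ℝ => c * t) L L := by
    intro c hc
    rw [tendsto_nhdsWithin_iff]
    constructor
    · have := (tendsto_self_L).const_mul c
      simpa using this
    · filter_upwards [self_mem_nhdsWithin] with t ht
      exact mul_pos hc ht
  have hscale : ∀ c : ℝ, 0 < c →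
      Filter.Tendsto (fun t : ℝ => u (c * t) / t ^ m) L (nhds (α * c ^ m)) := by
    intro c hc
    have h1 : Filter.Tendsto (fun t : ℝ => u (c * t) / (c * t) ^ m) L (nhds α) :=
      hu_lim.comp (tendsto_mul_L c hc)
    have h2 := h1.mul_const (c ^ m)
    apply h2.congr'
    filter_upwards [self_mem_nhdsWithin] with t ht
    have ht' : (0:ℝ) < t := ht
    rw [mul_pow]
    field_simp
  have hA := hscale (1/2) (by norm_num)
  have hB := hscale 2 (by norm_num)
  have hAhalf : ∀ᶠ t in L, u ((1/2 : ℝ) * t) = u (t / 2) := by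
    filter_upwards with t; ring_nf
  -- v t is between u (t/2) and u (2 t) eventually
  have hmemIcc : ∀ᶠ t in L, v t ∈ Set.uIcc (u ((1/2:ℝ) * t)) (u (2 * t)) := by
    have hhalf : (1/2:ℝ)^m < 1 := pow_lt_one₀ (by norm_num) (by norm_num) (by omega)
    have htwo : (1:ℝ) < 2^m := one_lt_pow₀ (by norm_num) (by omega)
    rcases lt_or_gt_of_ne hα with hneg | hpos
    · -- α < 0 : u(2t) < v t < u(t/2)
      have l1 : α * 2^m < α := by nlinarith
      have l2 : α < α * (1/2)^m := by nlinarith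
      filter_upwards [hB.eventually_lt hv_lim l1, hv_lim.eventually_lt hA l2,
        self_mem_nhdsWithin] with t h1 h2 ht
      have ht' : (0:ℝ) < t := ht
      have htm : (0:ℝ) < t ^ m := pow_pos ht' m
      have g1 : u (2*t) < v t := by
        have := mul_lt_mul_of_pos_right h1 htm
        rwa [div_mul_cancel₀ _ htm.ne', div_mul_cancel₀ _ htm.ne'] at this
      have g2 : v t < u ((1/2:ℝ)*t) := by
        have := mul_lt_mul_of_pos_right h2 htm
        rwa [div_mul_cancel₀ _ htm.ne', div_mul_cancel₀ _ htm.ne'] at this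
      exact Set.mem_uIcc.mpr (Or.inr ⟨g1.le, g2.le⟩)
    · -- α > 0 : u(t/2) < v t < u(2t)
      have l1 : α * (1/2)^m < α := by nlinarith
      have l2 : α < α * 2^m := by nlinarith
      filter_upwards [hA.eventually_lt hv_lim l1, hv_lim.eventually_lt hB l2,
        self_mem_nhdsWithin] with t h1 h2 ht
      have ht' : (0:ℝ) < t := ht
      have htm : (0:ℝ) < t ^ m := pow_pos ht' m
      have g1 : u ((1/2:ℝ)*t) < v t := by
        have := mul_lt_mul_of_pos_right h1 htm
        rwa [div_mul_cancel₀ _ htm.ne', div_mul_cancel₀ _ htm.ne'] at this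
      have g2 : v t < u (2*t) := by
        have := mul_lt_mul_of_pos_right h2 htm
        rwa [div_mul_cancel₀ _ htm.ne', div_mul_cancel₀ _ htm.ne'] at this
      exact Set.mem_uIcc.mpr (Or.inl ⟨g1.le, g2.le⟩)
  -- existence of φ
  have hex : ∀ᶠ t in L, ∃ s, (s ∈ Set.Icc ((1/2:ℝ)*t) (2*t) ∧ s ∈ Set.Ioo (0:ℝ) 1 ∧ u s = v t) := by
    filter_upwards [hmemIcc, Ioo_mem_nhdsGT (by norm_num : (0:ℝ) < 1/2)] with t hmem ht
    have ht0 : (0:ℝ) < t := ht.1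
    have ht2 : 2*t < 1 := by linarith [ht.2]
    have hle : (1/2:ℝ)*t ≤ 2*t := by linarith
    have hsub : Set.uIcc ((1/2:ℝ)*t) (2*t) ⊆ Set.Ioo (0:ℝ) 1 := by
      rw [Set.uIcc_of_le hle]
      intro z hz
      constructor
      · have : (0:ℝ) < (1/2:ℝ)*t := by linarith
        linarith [hz.1]
      · linarith [hz.2]
    have hcont : ContinuousOn u (Set.uIcc ((1/2:ℝ)*t) (2*t)) :=
      hu.continuousOn.mono (fun z hz => ioo_sub (hsub hz))
    obtain ⟨s, hs, hus⟩ := intermediate_value_uIcc hcont hmem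
    exact ⟨s, by rwa [Set.uIcc_of_le hle] at hs, hsub hs, hus⟩
  obtain ⟨φ, hφ⟩ := choose_fun hex
  have hm0 : (m:ℝ) ≠ 0 := Nat.cast_ne_zero.mpr (by omega)
  -- φ tends to 0 within Ioi 0
  have hφL : Filter.Tendsto φ L L := by
    rw [tendsto_nhdsWithin_iff]
    constructor
    · have hlow : Filter.Tendsto (fun t : ℝ => (1/2:ℝ) * t) L (nhds 0) := by
        simpa using tendsto_self_L.const_mul (1/2:ℝ)
      have hhigh : Filter.Tendsto (fun t : ℝ => (2:ℝ) * t) L (nhds 0) := by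
        simpa using tendsto_self_L.const_mul (2:ℝ)
      apply tendsto_of_tendsto_of_tendsto_of_le_of_le' hlow hhigh
      · filter_upwards [hφ] with t ht; exact ht.1.1
      · filter_upwards [hφ] with t ht; exact ht.1.2
    · filter_upwards [hφ] with t ht
      exact ht.2.1.1
  -- the ratio φ t / t tends to 1
  have hφIoo : ∀ᶠ t in L, φ t ∈ Set.Ioo (0:ℝ) 1 := by
    filter_upwards [hφ] with t ht; exact ht.2.1
  have huφ : ∀ᶠ t in L, u (φ t) = v t := by
    filter_upwards [hφ] with t ht; exact ht.2.2
  have hA2 : Filter.Tendsto (fun t => u (φ t) / (φ t) ^ m) L (nhds α) := hu_lim.comp hφL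
  have hA2ne : ∀ᶠ t in L, u (φ t) / (φ t) ^ m ≠ 0 := hA2.eventually_ne hα
  have hpowlim : Filter.Tendsto (fun t => (φ t / t) ^ m) L (nhds 1) := by
    have h1 := hv_lim.div hA2 hα
    rw [div_self hα] at h1
    apply h1.congr'
    filter_upwards [huφ, hA2ne, hφIoo, self_mem_nhdsWithin] with t huv hne hIoo ht
    have ht' : (0:ℝ) < t := ht
    have hφ0 : (0:ℝ) < φ t := hIoo.1
    have hune : u (φ t) ≠ 0 := by
      intro h0
      apply hne
      rw [h0, zero_div]
    show (v t / t ^ m) / (u (φ t) / φ t ^ m) = (φ t / t) ^ m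
    rw [← huv, div_pow]
    field_simp
  have hφratio : Filter.Tendsto (fun t => φ t / t) L (nhds 1) := by
    have h1 := hpowlim.rpow_const (p := (m:ℝ)⁻¹) (Or.inl one_ne_zero)
    rw [Real.one_rpow] at h1
    apply h1.congr'
    filter_upwards [hφIoo, self_mem_nhdsWithin] with t hIoo ht
    have ht' : (0:ℝ) < t := ht
    have hx : (0:ℝ) < φ t / t := div_pos hIoo.1 ht'
    rw [← Real.rpow_natCast (φ t / t) m, ← Real.rpow_mul hx.le, mul_inv_cancel₀ hm0,
      Real.rpow_one]
  -- MVT point for u between t and φ t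
  have hex2 : ∀ᶠ t in L, ∃ s, (s ∈ Set.uIcc t (φ t) ∧ s ∈ Set.Ioo (0:ℝ) 1 ∧
      u (φ t) - u t = deriv u s * (φ t - t)) := by
    filter_upwards [hφIoo, Ioo_mem_nhdsGT (zero_lt_one)] with t hIoo ht
    exact mvt hu ht hIoo
  obtain ⟨ξ, hξ⟩ := choose_fun hex2
  obtain ⟨hξ0, hξratio⟩ := between_tendsto hφratio
    (by filter_upwards [hξ] with t ht; exact ht.1)
  have hξL : Filter.Tendsto ξ L L := by
    rw [tendsto_nhdsWithin_iff]
    exact ⟨hξ0, by filter_upwards [hξ] with t ht; exact ht.2.1.1⟩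
  -- first derivative coefficient limits
  have hfm1 : ((Nat.factorial (m-1) : ℕ) : ℝ) ≠ 0 := Nat.cast_ne_zero.mpr (Nat.factorial_ne_zero _)
  have hc' : a / ((Nat.factorial (m-1) : ℕ) : ℝ) ≠ 0 := div_ne_zero ha hfm1
  have hU1ratio : Filter.Tendsto (fun s : ℝ => derivWithin u S s / s ^ (m-1)) L
      (nhds (a / ((Nat.factorial (m-1) : ℕ) : ℝ))) := by
    have hsm : ContDiffOn ℝ (⊤ : ℕ∞) (derivWithin u S) S := hu.derivWithin uS (by simp)
    have h0 : ∀ j < m-1, iteratedDerivWithin j (derivWithin u S) S 0 = 0 := by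
      intro j hj
      rw [← iteratedDerivWithin_succ']
      exact hu0 (j+1) (by omega)
    have h1 := ratio_tendsto hsm (m-1) h0
    rwa [← iteratedDerivWithin_succ', (by omega : m - 1 + 1 = m), hum] at h1
  have hU1ξ : Filter.Tendsto (fun t => deriv u (ξ t) / t ^ (m-1)) L
      (nhds (a / ((Nat.factorial (m-1) : ℕ) : ℝ))) := by
    have h1 := hU1ratio.comp hξL
    have h2 : Filter.Tendsto (fun t => (ξ t / t) ^ (m-1)) L (nhds 1) := by
      simpa using hξratio.pow (m-1)
    have h3 := h1.mul h2
    rw [mul_one] at h3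
    apply h3.congr'
    filter_upwards [hξ, self_mem_nhdsWithin] with t ht h't
    have htpos : (0:ℝ) < t := h't
    have hξpos : (0:ℝ) < ξ t := ht.2.1.1
    show derivWithin u S (ξ t) / (ξ t) ^ (m-1) * (ξ t / t) ^ (m-1) = deriv u (ξ t) / t ^ (m-1)
    rw [deriv_eqW ht.2.1, div_pow]
    field_simp
  -- the difference quotient for v - u
  have S1 := ratio_sub_tendsto hv hu (N+1) (fun j hj => (IH j (by omega)).symm)
  -- limit of (φ t - t) / t^(N+2-m)
  have hU1ne := hU1ξ.eventually_ne hc'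
  have S2 : Filter.Tendsto (fun t => (φ t - t) / t ^ (N+2-m)) L
      (nhds (((iteratedDerivWithin (N+1) v S 0 - iteratedDerivWithin (N+1) u S 0)
        / ((Nat.factorial (N+1) : ℕ) : ℝ)) / (a / ((Nat.factorial (m-1) : ℕ) : ℝ)))) := by
    have h4 := S1.div hU1ξ hc'
    apply h4.congr'
    filter_upwards [hξ, huφ, hU1ne, self_mem_nhdsWithin] with t ht huv hne h't
    have ht0 : (0:ℝ) < t := h't
    have hdne : deriv u (ξ t) ≠ 0 := fun h0 => hne (by rw [h0, zero_div])
    show (v t - u t) / t^(N+1) / (deriv u (ξ t) / t^(m-1)) = (φ t - t) / t^(N+2-m)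
    have hmvt2 : v t - u t = deriv u (ξ t) * (φ t - t) := by rw [← huv]; exact ht.2.2
    have hpow : t^(N+1) = t^(m-1) * t^(N+2-m) := by rw [← pow_add]; congr 1; omega
    rw [hmvt2, hpow]
    field_simp
  -- MVT point for the n-th derivative
  have hUn : ContDiffOn ℝ (⊤ : ℕ∞) (iteratedDerivWithin n u S) S := contDiffOn_iter hu n
  have hVn : ContDiffOn ℝ (⊤ : ℕ∞) (iteratedDerivWithin n v S) S := contDiffOn_iter hv n
  have hex3 : ∀ᶠ t in L, ∃ s, (s ∈ Set.uIcc t (φ t) ∧ s ∈ Set.Ioo (0:ℝ) 1 ∧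
      iteratedDerivWithin n u S (φ t) - iteratedDerivWithin n u S t
        = deriv (iteratedDerivWithin n u S) s * (φ t - t)) := by
    filter_upwards [hφIoo, Ioo_mem_nhdsGT (zero_lt_one)] with t hIoo ht
    exact mvt hUn ht hIoo
  obtain ⟨η, hη⟩ := choose_fun hex3
  obtain ⟨hη0, hηratio⟩ := between_tendsto hφratio
    (by filter_upwards [hη] with t ht; exact ht.1)
  have hηL : Filter.Tendsto η L L := by
    rw [tendsto_nhdsWithin_iff]
    exact ⟨hη0, by filter_upwards [hη] with t ht; exact ht.2.1.1⟩
  -- key pointwise identity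
  have hVnUn : ∀ᶠ t in L, iteratedDerivWithin n v S t - iteratedDerivWithin n u S t
      = deriv (iteratedDerivWithin n u S) (η t) * (φ t - t) := by
    filter_upwards [hη, hφ, Ioo_mem_nhdsGT (zero_lt_one)] with t h1 h2 ht
    have h3 : iteratedDerivWithin n v S t = iteratedDerivWithin n u S (φ t) := by
      rw [hveq t (ioo_sub ht), ← h2.2.2, ← hueq (φ t) (ioo_sub h2.2.1)]
    rw [h3]
    exact h1.2.2
  -- limit of the left-hand side
  have LHSlim : Filter.Tendsto (fun t => (iteratedDerivWithin n v S t
      - iteratedDerivWithin n u S t) / t ^ (N+1-n)) L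
      (nhds ((iteratedDerivWithin (N+1) v S 0 - iteratedDerivWithin (N+1) u S 0)
        / ((Nat.factorial (N+1-n) : ℕ) : ℝ))) := by
    have h0 : ∀ j < N+1-n, iteratedDerivWithin j (iteratedDerivWithin n v S) S 0
        = iteratedDerivWithin j (iteratedDerivWithin n u S) S 0 := by
      intro j hj
      rw [iter_iter n j zero_mem_S, iter_iter n j zero_mem_S]
      exact (IH (n+j) (by omega)).symm
    have h5 := ratio_sub_tendsto hVn hUn (N+1-n) h0
    rwa [iter_iter n (N+1-n) zero_mem_S, iter_iter n (N+1-n) zero_mem_S,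
      (by omega : n + (N+1-n) = N+1)] at h5
  have hfNn : ((Nat.factorial (N+1-n) : ℕ) : ℝ) ≠ 0 := Nat.cast_ne_zero.mpr (Nat.factorial_ne_zero _)
  rcases Nat.lt_or_ge n m with hnm | hnm
  · -- case n < m
    have hUn1coef : ∀ j : ℕ, iteratedDerivWithin j (derivWithin (iteratedDerivWithin n u S) S) S 0
        = iteratedDerivWithin (n+j+1) u S 0 := by
      intro j
      rw [← iteratedDerivWithin_succ', iter_iter n (j+1) zero_mem_S]
      congr 1
    have hfmn1 : ((Nat.factorial (m-n-1) : ℕ) : ℝ) ≠ 0 :=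
      Nat.cast_ne_zero.mpr (Nat.factorial_ne_zero _)
    have hUn1ratio : Filter.Tendsto (fun s : ℝ =>
        derivWithin (iteratedDerivWithin n u S) S s / s ^ (m-n-1)) L
        (nhds (a / ((Nat.factorial (m-n-1) : ℕ) : ℝ))) := by
      have hsm : ContDiffOn ℝ (⊤ : ℕ∞) (derivWithin (iteratedDerivWithin n u S) S) S :=
        hUn.derivWithin uS (by simp)
      have h0 : ∀ j < m-n-1, iteratedDerivWithin j
          (derivWithin (iteratedDerivWithin n u S) S) S 0 = 0 := by
        intro j hj
        rw [hUn1coef j]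
        exact hu0 (n+j+1) (by omega)
      have h1 := ratio_tendsto hsm (m-n-1) h0
      rwa [hUn1coef (m-n-1), (by omega : n + (m-n-1) + 1 = m), hum] at h1
    have hUn1η : Filter.Tendsto (fun t =>
        deriv (iteratedDerivWithin n u S) (η t) / t ^ (m-n-1)) L
        (nhds (a / ((Nat.factorial (m-n-1) : ℕ) : ℝ))) := by
      have h1 := hUn1ratio.comp hηL
      have h2 : Filter.Tendsto (fun t => (η t / t) ^ (m-n-1)) L (nhds 1) := by
        simpa using hηratio.pow (m-n-1)
      have h3 := h1.mul h2
      rw [mul_one] at h3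
      apply h3.congr'
      filter_upwards [hη, self_mem_nhdsWithin] with t ht h't
      have htpos : (0:ℝ) < t := h't
      have hηpos : (0:ℝ) < η t := ht.2.1.1
      show derivWithin (iteratedDerivWithin n u S) S (η t) / (η t) ^ (m-n-1)
          * (η t / t) ^ (m-n-1)
        = deriv (iteratedDerivWithin n u S) (η t) / t ^ (m-n-1)
      rw [deriv_eqW ht.2.1, div_pow]
      field_simp
    have hprod := hUn1η.mul S2
    have heq := tendsto_nhds_unique LHSlim (hprod.congr' (by
      filter_upwards [hVnUn, self_mem_nhdsWithin] with t hkey h't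
      have ht0 : (0:ℝ) < t := h't
      show deriv (iteratedDerivWithin n u S) (η t) / t^(m-n-1) * ((φ t - t) / t^(N+2-m))
        = (iteratedDerivWithin n v S t - iteratedDerivWithin n u S t) / t^(N+1-n)
      rw [hkey]
      have hpow : t^(N+1-n) = t^(m-n-1) * t^(N+2-m) := by rw [← pow_add]; congr 1; omega
      rw [hpow]
      field_simp))
    -- conclude D = 0 from the factorial inequality
    by_contra hne0
    have hD : iteratedDerivWithin (N+1) v S 0 - iteratedDerivWithin (N+1) u S 0 ≠ 0 :=
      sub_ne_zero.mpr (fun h => hne0 h.symm)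
    set D := iteratedDerivWithin (N+1) v S 0 - iteratedDerivWithin (N+1) u S 0 with hDdef
    have hfN1 : ((Nat.factorial (N+1) : ℕ) : ℝ) ≠ 0 :=
      Nat.cast_ne_zero.mpr (Nat.factorial_ne_zero _)
    have hRHS : (a / ((Nat.factorial (m-n-1) : ℕ) : ℝ))
        * ((D / ((Nat.factorial (N+1) : ℕ) : ℝ)) / (a / ((Nat.factorial (m-1) : ℕ) : ℝ)))
        = D * ((Nat.factorial (m-1) : ℕ) : ℝ)
          / (((Nat.factorial (m-n-1) : ℕ) : ℝ) * ((Nat.factorial (N+1) : ℕ) : ℝ)) := by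
      field_simp
    rw [hRHS] at heq
    have hcross : D * (((Nat.factorial (m-n-1) : ℕ) : ℝ) * ((Nat.factorial (N+1) : ℕ) : ℝ))
        = D * (((Nat.factorial (m-1) : ℕ) : ℝ) * ((Nat.factorial (N+1-n) : ℕ) : ℝ)) := by
      have h7 := (div_eq_div_iff hfNn (mul_ne_zero hfmn1 hfN1)).mp heq
      rw [h7]; ring
    have h8 : (((Nat.factorial (m-n-1) : ℕ) : ℝ) * ((Nat.factorial (N+1) : ℕ) : ℝ))
        = (((Nat.factorial (m-1) : ℕ) : ℝ) * ((Nat.factorial (N+1-n) : ℕ) : ℝ)) :=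
      mul_left_cancel₀ hD hcross
    have h9 : Nat.factorial (m-1) * Nat.factorial (N+1-n)
        < Nat.factorial (m-n-1) * Nat.factorial (N+1) := by
      have := fact_ineq hn (by omega : n ≤ m-1) (by omega : m-1 < N+1)
      rwa [(by omega : m-1-n = m-n-1), (by omega : N+1-n = N+1-n)] at this
    have h10 : (((Nat.factorial (m-1) : ℕ) : ℝ) * ((Nat.factorial (N+1-n) : ℕ) : ℝ))
        < (((Nat.factorial (m-n-1) : ℕ) : ℝ) * ((Nat.factorial (N+1) : ℕ) : ℝ)) := by
      exact_mod_cast h9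
    rw [h8] at h10
    exact lt_irrefl _ h10
  · -- case m ≤ n, i.e. m = n
    have hmn : m = n := le_antisymm hnm hm
    have hsm : ContDiffOn ℝ (⊤ : ℕ∞) (derivWithin (iteratedDerivWithin n u S) S) S :=
      hUn.derivWithin uS (by simp)
    have hcw : ContinuousWithinAt (derivWithin (iteratedDerivWithin n u S) S) S 0 :=
      hsm.continuousOn.continuousWithinAt zero_mem_S
    have hηS : Filter.Tendsto η L (nhdsWithin 0 S) := by
      rw [tendsto_nhdsWithin_iff]
      exact ⟨hη0, by filter_upwards [hη] with t ht; exact ioo_sub ht.2.1⟩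
    have hUn1cont : Filter.Tendsto (fun t => deriv (iteratedDerivWithin n u S) (η t)) L
        (nhds (derivWithin (iteratedDerivWithin n u S) S 0)) := by
      have h1 := Filter.Tendsto.comp hcw hηS
      apply h1.congr'
      filter_upwards [hη] with t ht
      show derivWithin (iteratedDerivWithin n u S) S (η t) = _
      rw [deriv_eqW ht.2.1]
    have hfin := (hUn1cont.mul S2).mul tendsto_self_L
    rw [mul_zero] at hfin
    have heq := tendsto_nhds_unique LHSlim (hfin.congr' (by
      filter_upwards [hVnUn, self_mem_nhdsWithin] with t hkey h't
      have ht0 : (0:ℝ) < t := h't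
      show deriv (iteratedDerivWithin n u S) (η t) * ((φ t - t) / t^(N+2-m)) * t
        = (iteratedDerivWithin n v S t - iteratedDerivWithin n u S t) / t^(N+1-n)
      rw [hkey]
      have hpow : t^(N+2-m) = t^(N+1-n) * t := by rw [← pow_succ]; congr 1; omega
      rw [hpow]
      have hne2 : t^(N+1-n) ≠ 0 := (pow_pos ht0 _).ne'
      field_simp))
    have hD0 : iteratedDerivWithin (N+1) v S 0 - iteratedDerivWithin (N+1) u S 0 = 0 := by
      have := heq
      rw [div_eq_zero_iff] at this
      rcases this with h|h
      · exact h
      · exact absurd h hfNn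
    linarith [hD0]

end OdeDet
end

/-- **All derivatives at `0` of a solution are determined by `m`, `n`, and `f`.**
If two smooth solutions on `[0, 1)` of `w⁽ⁿ⁾(t) = f(w(t))` satisfy
`w(0) = ⋯ = w⁽ᵐ⁻¹⁾(0) = 0` and `w⁽ᵐ⁾(0) = a ≠ 0` with `m ≥ n`, then their
derivatives of all orders agree at `0`. -/
theorem ode_derivatives_at_zero_determined
    (n m : ℕ) (hn : 1 ≤ n) (hm : n ≤ m) (f : ℝ → ℝ) (a : ℝ) (ha : a ≠ 0)
    (u v : ℝ → ℝ)
    (hu : ContDiffOn ℝ (⊤ : ℕ∞) u (Set.Ico (0 : ℝ) 1))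
    (hv : ContDiffOn ℝ (⊤ : ℕ∞) v (Set.Ico (0 : ℝ) 1))
    (hueq : ∀ t ∈ Set.Ico (0 : ℝ) 1,
      iteratedDerivWithin n u (Set.Ico (0 : ℝ) 1) t = f (u t))
    (hveq : ∀ t ∈ Set.Ico (0 : ℝ) 1,
      iteratedDerivWithin n v (Set.Ico (0 : ℝ) 1) t = f (v t))
    (hu0 : ∀ k < m, iteratedDerivWithin k u (Set.Ico (0 : ℝ) 1) 0 = 0)
    (hum : iteratedDerivWithin m u (Set.Ico (0 : ℝ) 1) 0 = a)
    (hv0 : ∀ k < m, iteratedDerivWithin k v (Set.Ico (0 : ℝ) 1) 0 = 0)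
    (hvm : iteratedDerivWithin m v (Set.Ico (0 : ℝ) 1) 0 = a) :
    ∀ k : ℕ, iteratedDerivWithin k u (Set.Ico (0 : ℝ) 1) 0 =
      iteratedDerivWithin k v (Set.Ico (0 : ℝ) 1) 0 := by
  intro k
  induction k using Nat.strong_induction_on with
  | _ k IH =>
    rcases Nat.lt_or_ge k (m+1) with hk | hk
    · rcases Nat.lt_or_ge k m with hk2 | hk2
      · rw [hu0 k hk2, hv0 k hk2]
      · have hkm : k = m := by omega
        subst hkm
        rw [hum, hvm]
    · obtain ⟨N, rfl⟩ : ∃ N, k = N + 1 := ⟨k-1, by omega⟩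
      exact OdeDet.step n m hn hm f a ha u v hu hv hueq hveq hu0 hum N (by omega)
        (fun j hj => IH j (by omega))
end

section
/- Let $n \geq 1$ and $m \geq n$ be integers, let $f : \mathbb{R} \to \mathbb{R}$ be any function, and suppose $u, v \in C^{\infty}([0,1))$ both satisfy $w^{(n)}(t) = f(w(t))$ for all $t \in [0,1)$ together with $w(0) = w'(0) = \cdots = w^{(m-1)}(0) = 0$ and $w^{(m)}(0) = a > 0$. Then the function $w = u - v$ satisfies a singular differential inequality: there exist constants $C > 0$ and $\delta > 0$ such that $|w^{(n)}(t)| \leq C \, \frac{|w(t)|}{t^{n}}$ for all $t \in (0,\delta)$. -/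
open Set Nat

/-- Mean value type bound: if `g 0 = 0` and `|g'| ≤ K x^p` on `(0,c)`, then
`|g t| ≤ K t^(p+1)` on `[0,c]`. -/
lemma dsi_abs_le_of_deriv_bound {c K : ℝ} (hc : 0 < c) (hc1 : c ≤ 1) {p : ℕ} {g g' : ℝ → ℝ}
    (hg0 : g 0 = 0) (hcont : ContinuousOn g (Icc 0 c))
    (hderiv : ∀ x ∈ Ioo (0:ℝ) c, HasDerivAt g (g' x) x)
    (hK : 0 ≤ K)
    (hbound : ∀ x ∈ Ioo (0:ℝ) c, |g' x| ≤ K * x ^ p) :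
    ∀ t ∈ Icc (0:ℝ) c, |g t| ≤ K * t ^ (p+1) := by
  have main : ∀ (h h' : ℝ → ℝ), h 0 = 0 → ContinuousOn h (Icc 0 c) →
      (∀ x ∈ Ioo (0:ℝ) c, HasDerivAt h (h' x) x) →
      (∀ x ∈ Ioo (0:ℝ) c, h' x ≤ K * x ^ p) →
      ∀ t ∈ Icc (0:ℝ) c, h t ≤ K * t ^ (p+1) := by
    intro h h' h0 hcont hd hb t ht
    have hFd : ∀ x ∈ Ioo (0:ℝ) c, HasDerivAt (fun x => K * x ^ (p+1) - h x)
        (K * ((p+1) * x ^ p) - h' x) x := by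
      intro x hx
      refine (((hasDerivAt_pow (p+1) x).const_mul K).sub (hd x hx)).congr_deriv ?_
      simp [Nat.succ_sub_one]
      try ring
    have hmono : MonotoneOn (fun x => K * x ^ (p+1) - h x) (Icc 0 c) := by
      apply monotoneOn_of_deriv_nonneg (convex_Icc _ _)
      · exact ((continuous_const.mul (continuous_pow _)).continuousOn).sub hcont
      · rw [interior_Icc]
        exact fun x hx => ((hFd x hx).differentiableAt).differentiableWithinAt
      · rw [interior_Icc]
        intro x hx
        rw [(hFd x hx).deriv]
        have hxp : (0:ℝ) ≤ x ^ p := pow_nonneg hx.1.le p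
        have := hb x hx
        nlinarith [mul_nonneg hK hxp]
    have h0m : (0:ℝ) ∈ Icc (0:ℝ) c := ⟨le_refl _, hc.le⟩
    have := hmono h0m ht ht.1
    simpa [h0] using this
  intro t ht
  rw [abs_le]
  constructor
  · have hneg := main (fun x => -g x) (fun x => -(g' x)) (by simp [hg0]) hcont.neg
      (fun x hx => (hderiv x hx).neg)
      (fun x hx => le_trans (neg_le_abs _) (hbound x hx)) t ht
    try simp only [] at hneg
    linarith
  · exact main g g' hg0 hcont hderiv
      (fun x hx => le_trans (le_abs_self _) (hbound x hx)) t ht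

lemma dsi_hasDerivAt {u : ℝ → ℝ} (hu : ContDiffOn ℝ (⊤ : ℕ∞) u (Ico (0:ℝ) 1)) (k : ℕ) :
    ∀ x ∈ Ioo (0:ℝ) 1, HasDerivAt (iteratedDerivWithin k u (Ico (0:ℝ) 1))
      (iteratedDerivWithin (k+1) u (Ico (0:ℝ) 1) x) x := by
  intro x hx
  have hI : UniqueDiffOn ℝ (Ico (0:ℝ) 1) := uniqueDiffOn_Ico 0 1
  have hxI : x ∈ Ico (0:ℝ) 1 := ⟨hx.1.le, hx.2⟩
  have h1 : DifferentiableWithinAt ℝ (iteratedDerivWithin k u (Ico (0:ℝ) 1)) (Ico (0:ℝ) 1) x :=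
    (hu.differentiableOn_iteratedDerivWithin (by exact_mod_cast ENat.coe_lt_top k) hI) x hxI
  have h2 : HasDerivWithinAt (iteratedDerivWithin k u (Ico (0:ℝ) 1))
      (iteratedDerivWithin (k+1) u (Ico (0:ℝ) 1) x) (Ico (0:ℝ) 1) x := by
    rw [iteratedDerivWithin_succ]
    exact h1.hasDerivWithinAt
  exact h2.hasDerivAt (Ico_mem_nhds_iff.mpr hx)

/-- Taylor-type estimate for the iterated derivatives of a smooth function whose
first `m` derivatives vanish at `0`. -/
lemma dsi_taylor {m : ℕ} {a M c : ℝ} (hc : 0 < c) (hc1 : c < 1) (hM : 0 ≤ M)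
    {u : ℝ → ℝ} (hu : ContDiffOn ℝ (⊤ : ℕ∞) u (Ico (0:ℝ) 1))
    (hu0 : ∀ k < m, iteratedDerivWithin k u (Ico (0:ℝ) 1) 0 = 0)
    (hum : iteratedDerivWithin m u (Ico (0:ℝ) 1) 0 = a)
    (hMb : ∀ x ∈ Icc (0:ℝ) c, |iteratedDerivWithin (m+1) u (Ico (0:ℝ) 1) x| ≤ M) :
    ∀ j, j ≤ m → ∀ t ∈ Icc (0:ℝ) c,
      |iteratedDerivWithin (m - j) u (Ico (0:ℝ) 1) t - a * t ^ j / (j !)| ≤ M * t ^ (j+1) := by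
  have hI : UniqueDiffOn ℝ (Ico (0:ℝ) 1) := uniqueDiffOn_Ico 0 1
  have hsub : Icc (0:ℝ) c ⊆ Ico (0:ℝ) 1 := fun x hx => ⟨hx.1, lt_of_le_of_lt hx.2 hc1⟩
  have hsub' : Ioo (0:ℝ) c ⊆ Ioo (0:ℝ) 1 := fun x hx => ⟨hx.1, lt_trans hx.2 hc1⟩
  have hcont : ∀ k : ℕ, ContinuousOn (iteratedDerivWithin k u (Ico (0:ℝ) 1)) (Ico (0:ℝ) 1) :=
    fun k => hu.continuousOn_iteratedDerivWithin (by exact_mod_cast le_top) hI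
  intro j
  induction j with
  | zero =>
    intro _ t ht
    have := dsi_abs_le_of_deriv_bound hc hc1.le (p := 0)
      (g := fun t => iteratedDerivWithin m u (Ico (0:ℝ) 1) t - a)
      (g' := iteratedDerivWithin (m+1) u (Ico (0:ℝ) 1))
      (by simp [hum]) (((hcont m).mono hsub).sub continuousOn_const)
      (fun x hx => (dsi_hasDerivAt hu m x (hsub' hx)).sub_const a) hM
      (fun x hx => by simpa using hMb x (Ioo_subset_Icc_self hx)) t ht
    simpa using this
  | succ j ih =>
    intro hjm t ht
    have hjm' : j ≤ m := le_of_lt hjm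
    have hq1 : m - (j+1) + 1 = m - j := by omega
    have key := dsi_abs_le_of_deriv_bound hc hc1.le
      (g := fun t => iteratedDerivWithin (m - (j+1)) u (Ico (0:ℝ) 1) t
        - a * t ^ (j+1) / ((j+1)!))
      (g' := fun x => iteratedDerivWithin (m - j) u (Ico (0:ℝ) 1) x - a * x ^ j / (j !))
      (by simp [hu0 (m - (j+1)) (by omega)])
      (((hcont _).mono hsub).sub
        (((continuous_const.mul (continuous_pow _)).div_const _).continuousOn))
      (fun x hx => by
        have h1 : HasDerivAt (iteratedDerivWithin (m - (j+1)) u (Ico (0:ℝ) 1))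
            (iteratedDerivWithin (m - j) u (Ico (0:ℝ) 1) x) x := by
          have := dsi_hasDerivAt hu (m - (j+1)) x (hsub' hx)
          rwa [hq1] at this
        have h2 : HasDerivAt (fun t : ℝ => a * t ^ (j+1) / ((j+1)!))
            (a * x ^ j / (j !)) x := by
          have := ((hasDerivAt_pow (j+1) x).const_mul a).div_const (((j+1)! : ℝ))
          refine this.congr_deriv ?_
          have : ((j+1)! : ℝ) = (j+1) * (j !) := by
            rw [Nat.factorial_succ]; push_cast; ring
          rw [this, Nat.add_sub_cancel]
          field_simp [Nat.succ_sub_one]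
          push_cast; ring
        exact h1.sub h2)
      hM
      (fun x hx => ih hjm' x (Ioo_subset_Icc_self hx)) t ht
    exact key

set_option maxHeartbeats 2000000 in
/-- **The difference of two solutions satisfies a singular differential inequality.**
If `u, v` are smooth solutions on `[0, 1)` of `w⁽ⁿ⁾(t) = f(w(t))` with
`w(0) = ⋯ = w⁽ᵐ⁻¹⁾(0) = 0`, `w⁽ᵐ⁾(0) = a > 0`, `m ≥ n ≥ 1`, then `w = u - v`
satisfies `|w⁽ⁿ⁾(t)| ≤ C |w(t)| / tⁿ` for small `t > 0`. -/
theorem difference_singular_inequality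
    (n m : ℕ) (hn : 1 ≤ n) (hm : n ≤ m) (f : ℝ → ℝ) (a : ℝ) (ha : 0 < a)
    (u v : ℝ → ℝ)
    (hu : ContDiffOn ℝ (⊤ : ℕ∞) u (Set.Ico (0 : ℝ) 1))
    (hv : ContDiffOn ℝ (⊤ : ℕ∞) v (Set.Ico (0 : ℝ) 1))
    (hueq : ∀ t ∈ Set.Ico (0 : ℝ) 1,
      iteratedDerivWithin n u (Set.Ico (0 : ℝ) 1) t = f (u t))
    (hveq : ∀ t ∈ Set.Ico (0 : ℝ) 1,
      iteratedDerivWithin n v (Set.Ico (0 : ℝ) 1) t = f (v t))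
    (hu0 : ∀ k < m, iteratedDerivWithin k u (Set.Ico (0 : ℝ) 1) 0 = 0)
    (hum : iteratedDerivWithin m u (Set.Ico (0 : ℝ) 1) 0 = a)
    (hv0 : ∀ k < m, iteratedDerivWithin k v (Set.Ico (0 : ℝ) 1) 0 = 0)
    (hvm : iteratedDerivWithin m v (Set.Ico (0 : ℝ) 1) 0 = a) :
    ∃ C > (0 : ℝ), ∃ δ > (0 : ℝ), ∀ t ∈ Set.Ioo (0 : ℝ) δ,
      |iteratedDerivWithin n (fun s => u s - v s) (Set.Ico (0 : ℝ) 1) t| ≤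
        C * |u t - v t| / t ^ n := by
  have hI : UniqueDiffOn ℝ (Set.Ico (0:ℝ) 1) := uniqueDiffOn_Ico 0 1
  have hc : (0:ℝ) < 1/2 := by norm_num
  have hc1 : (1/2:ℝ) < 1 := by norm_num
  have hsubIcc : Set.Icc (0:ℝ) (1/2) ⊆ Set.Ico (0:ℝ) 1 :=
    fun x hx => ⟨hx.1, lt_of_le_of_lt hx.2 hc1⟩
  have hfac : (0:ℝ) < (m ! : ℝ) := by exact_mod_cast m.factorial_pos
  obtain ⟨Mu, hMu⟩ := (isCompact_Icc (a := (0:ℝ)) (b := 1/2)).exists_bound_of_continuousOn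
    ((hu.continuousOn_iteratedDerivWithin (m := m+1) (by exact_mod_cast le_top) hI).mono hsubIcc)
  obtain ⟨Mv, hMv⟩ := (isCompact_Icc (a := (0:ℝ)) (b := 1/2)).exists_bound_of_continuousOn
    ((hv.continuousOn_iteratedDerivWithin (m := m+1) (by exact_mod_cast le_top) hI).mono hsubIcc)
  set M : ℝ := max (max Mu Mv) 1 with hMdef
  have hM1 : (1:ℝ) ≤ M := le_max_right _ _
  have hM0 : (0:ℝ) ≤ M := by linarith
  have hMpos : (0:ℝ) < M := by linarith
  have hMbu : ∀ x ∈ Set.Icc (0:ℝ) (1/2),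
      |iteratedDerivWithin (m+1) u (Set.Ico (0:ℝ) 1) x| ≤ M := by
    intro x hx
    have h := hMu x hx
    rw [Real.norm_eq_abs] at h
    exact h.trans ((le_max_left _ _).trans (le_max_left _ _))
  have hMbv : ∀ x ∈ Set.Icc (0:ℝ) (1/2),
      |iteratedDerivWithin (m+1) v (Set.Ico (0:ℝ) 1) x| ≤ M := by
    intro x hx
    have h := hMv x hx
    rw [Real.norm_eq_abs] at h
    exact h.trans ((le_max_right _ _).trans (le_max_left _ _))
  set cu : ℝ := a / (2 * (m ! : ℝ)) with hcudef
  have hcu : 0 < cu := div_pos ha (by linarith)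
  set δ₁ : ℝ := min (1/2) (cu / M) with hd1def
  have hδ₁ : 0 < δ₁ := lt_min hc (div_pos hcu hMpos)
  have hδ₁c : δ₁ ≤ 1/2 := min_le_left _ _
  have hδ₁M : M * δ₁ ≤ cu := by
    have h1 : δ₁ ≤ cu / M := min_le_right _ _
    calc M * δ₁ ≤ M * (cu / M) := mul_le_mul_of_nonneg_left h1 hM0
      _ = cu := by field_simp
  have hsub1 : Set.Icc (0:ℝ) δ₁ ⊆ Set.Icc (0:ℝ) (1/2) :=
    fun x hx => ⟨hx.1, hx.2.trans hδ₁c⟩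
  have hsubI : Set.Icc (0:ℝ) δ₁ ⊆ Set.Ico (0:ℝ) 1 := hsub1.trans hsubIcc
  have Tu := dsi_taylor hc hc1 hM0 hu hu0 hum hMbu
  have Tv := dsi_taylor hc hc1 hM0 hv hv0 hvm hMbv
  have herr : ∀ t ∈ Set.Icc (0:ℝ) δ₁, ∀ j : ℕ, M * t ^ (j+1) ≤ cu * t ^ j := by
    intro t ht j
    have h1 : M * t ≤ cu := by
      have h2 := mul_le_mul_of_nonneg_left ht.2 hM0
      linarith
    calc M * t ^ (j+1) = (M * t) * t ^ j := by ring
      _ ≤ cu * t ^ j := mul_le_mul_of_nonneg_right h1 (pow_nonneg ht.1 j)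
  have hval : ∀ w : ℝ → ℝ,
      (∀ j ≤ m, ∀ t ∈ Set.Icc (0:ℝ) (1/2),
        |iteratedDerivWithin (m - j) w (Set.Ico (0:ℝ) 1) t - a * t ^ j / (j !)| ≤ M * t ^ (j+1)) →
      ∀ t ∈ Set.Icc (0:ℝ) δ₁, cu * t ^ m ≤ w t ∧ w t ≤ 3 * cu * t ^ m := by
    intro w Tw t ht
    have h := Tw m le_rfl t (hsub1 ht)
    rw [Nat.sub_self] at h
    simp only [iteratedDerivWithin_zero] at h
    have hacu : a * t ^ m / (m ! : ℝ) = 2 * cu * t ^ m := by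
      rw [hcudef]; field_simp
    rw [hacu, abs_le] at h
    have he := herr t ht m
    constructor <;> linarith [h.1, h.2]
  have hut := hval u Tu
  have hvt := hval v Tv
  have hu1 : ∀ t ∈ Set.Icc (0:ℝ) δ₁,
      cu * t ^ (m-1) ≤ iteratedDerivWithin 1 u (Set.Ico (0:ℝ) 1) t := by
    intro t ht
    have h := Tu (m-1) (by omega) t (hsub1 ht)
    have hidx : m - (m-1) = 1 := by omega
    rw [hidx, abs_le] at h
    have he := herr t ht (m-1)
    have hkey : 2 * cu * t ^ (m-1) ≤ a * t ^ (m-1) / ((m-1)! : ℝ) := by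
      have hf1 : (0:ℝ) < ((m-1)! : ℝ) := by exact_mod_cast (m-1).factorial_pos
      have hf2 : ((m-1)! : ℝ) ≤ (m ! : ℝ) := by
        exact_mod_cast Nat.factorial_le (by omega : m - 1 ≤ m)
      have h3 : a * t ^ (m-1) / (m ! : ℝ) ≤ a * t ^ (m-1) / ((m-1)! : ℝ) :=
        div_le_div_of_nonneg_left (mul_nonneg ha.le (pow_nonneg ht.1 _)) hf1 hf2
      have h4 : a * t ^ (m-1) / (m ! : ℝ) = 2 * cu * t ^ (m-1) := by
        rw [hcudef]; field_simp
      linarith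
    linarith [h.1]
  have hDn1 : ∀ x ∈ Set.Icc (0:ℝ) δ₁,
      |iteratedDerivWithin (n+1) u (Set.Ico (0:ℝ) 1) x| ≤ (a + M) * x ^ (m-n-1) := by
    intro x hx
    have hx1 : x ≤ 1 := by linarith [hx.2, hδ₁c]
    rcases eq_or_lt_of_le hm with heq | hlt
    · have hmn0 : m - n - 1 = 0 := by omega
      rw [hmn0, pow_zero, mul_one]
      have h := hMbu x (hsub1 hx)
      rw [← heq] at h
      linarith
    · have h := Tu (m - n - 1) (by omega) x (hsub1 hx)
      have hidx : m - (m - n - 1) = n + 1 := by omega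
      rw [hidx] at h
      have hnum : (0:ℝ) ≤ a * x ^ (m-n-1) := mul_nonneg ha.le (pow_nonneg hx.1 _)
      have hf1 : (1:ℝ) ≤ ((m-n-1)! : ℝ) := by
        exact_mod_cast Nat.one_le_iff_ne_zero.mpr (m-n-1).factorial_ne_zero
      have hY : |a * x ^ (m-n-1) / ((m-n-1)! : ℝ)| ≤ a * x ^ (m-n-1) := by
        rw [abs_of_nonneg (div_nonneg hnum (by linarith))]
        exact div_le_self hnum hf1
      have hM' : M * x ^ (m-n-1+1) ≤ M * x ^ (m-n-1) :=
        mul_le_mul_of_nonneg_left (pow_le_pow_of_le_one hx.1 hx1 (by omega)) hM0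
      calc |iteratedDerivWithin (n+1) u (Set.Ico (0:ℝ) 1) x|
          ≤ |iteratedDerivWithin (n+1) u (Set.Ico (0:ℝ) 1) x
              - a * x ^ (m-n-1) / ((m-n-1)! : ℝ)| + |a * x ^ (m-n-1) / ((m-n-1)! : ℝ)| := by
            have h5 := abs_add_le (iteratedDerivWithin (n+1) u (Set.Ico (0:ℝ) 1) x
              - a * x ^ (m-n-1) / ((m-n-1)! : ℝ)) (a * x ^ (m-n-1) / ((m-n-1)! : ℝ))
            simpa using h5
        _ ≤ M * x ^ (m-n-1) + a * x ^ (m-n-1) := by linarith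
        _ = (a + M) * x ^ (m-n-1) := by ring
  have hu00 : u 0 = 0 := by
    have h := hu0 0 (by omega)
    simpa using h
  set C : ℝ := (a + M) * 3 ^ (m-n-1) * 3 ^ (m-1) / cu with hCdef
  have hC : 0 < C := by
    rw [hCdef]
    exact div_pos (mul_pos (mul_pos (by linarith) (by positivity)) (by positivity)) hcu
  refine ⟨C, hC, δ₁ / 3, by linarith, ?_⟩
  intro t ht
  obtain ⟨ht0, htδ⟩ := ht
  have htδ₁ : t ∈ Set.Icc (0:ℝ) δ₁ := ⟨ht0.le, by linarith⟩
  have htI : t ∈ Set.Ico (0:ℝ) 1 := hsubI htδ₁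
  have htIoo : t ∈ Set.Ioo (0:ℝ) 1 := ⟨ht0, htI.2⟩
  have ht1 : t ≤ 1 := htI.2.le
  obtain ⟨hvl, hvu⟩ := hvt t htδ₁
  have hvpos : 0 < v t := lt_of_lt_of_le (mul_pos hcu (pow_pos ht0 m)) hvl
  have h9 : (3:ℝ) ≤ 3 ^ m := by
    calc (3:ℝ) = 3 ^ 1 := (pow_one 3).symm
      _ ≤ 3 ^ m := pow_le_pow_right₀ (by norm_num) (by omega)
  have h3t : 3 * cu * t ^ m ≤ cu * δ₁ ^ m := by
    have h1 : t ≤ δ₁ / 3 := htδ.le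
    have h2 : t ^ m ≤ (δ₁/3) ^ m := pow_le_pow_left₀ ht0.le h1 m
    have h3 : (3:ℝ) * (δ₁/3) ^ m ≤ δ₁ ^ m := by
      rw [div_pow, mul_div_assoc']
      rw [div_le_iff₀ (by positivity : (0:ℝ) < (3:ℝ) ^ m)]
      nlinarith [pow_nonneg hδ₁.le m, h9]
    calc 3 * cu * t ^ m ≤ 3 * cu * (δ₁/3) ^ m := by nlinarith [h2, hcu.le]
      _ = cu * (3 * (δ₁/3) ^ m) := by ring
      _ ≤ cu * δ₁ ^ m := mul_le_mul_of_nonneg_left h3 hcu.le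
  have hud : cu * δ₁ ^ m ≤ u δ₁ := (hut δ₁ ⟨hδ₁.le, le_refl _⟩).1
  have hvle : v t ≤ u δ₁ := le_trans hvu (le_trans h3t hud)
  have hucont : ContinuousOn u (Set.Icc 0 δ₁) := hu.continuousOn.mono hsubI
  obtain ⟨s, hsIcc, hus⟩ := intermediate_value_Icc hδ₁.le hucont
    (⟨by rw [hu00]; exact hvpos.le, hvle⟩ : v t ∈ Set.Icc (u 0) (u δ₁))
  have hs0 : 0 < s := by
    rcases eq_or_lt_of_le hsIcc.1 with h | h
    · exfalso; rw [← h, hu00] at hus; exact (ne_of_gt hvpos) hus.symm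
    · exact h
  have hsI : s ∈ Set.Ico (0:ℝ) 1 := hsubI hsIcc
  have hsIoo : s ∈ Set.Ioo (0:ℝ) 1 := ⟨hs0, hsI.2⟩
  obtain ⟨hsl, hsu2⟩ := hut s hsIcc
  have hst : s ≤ 3 * t := by
    have h2 : cu * s ^ m ≤ 3 * cu * t ^ m := by
      calc cu * s ^ m ≤ u s := hsl
        _ = v t := hus
        _ ≤ 3 * cu * t ^ m := hvu
    have h3 : 3 * cu * t ^ m ≤ cu * (3*t) ^ m := by
      rw [mul_pow]
      calc 3 * cu * t ^ m = 3 * (cu * t ^ m) := by ring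
        _ ≤ 3 ^ m * (cu * t ^ m) :=
            mul_le_mul_of_nonneg_right h9 (mul_nonneg hcu.le (pow_nonneg ht0.le m))
        _ = cu * (3 ^ m * t ^ m) := by ring
    have h4 := le_of_mul_le_mul_left (by linarith : cu * s ^ m ≤ cu * (3*t) ^ m) hcu
    exact le_of_pow_le_pow_left₀ (by omega) (by positivity) h4
  have hts : t ≤ 3 * s := by
    have h2 : cu * t ^ m ≤ 3 * cu * s ^ m := by
      calc cu * t ^ m ≤ v t := hvl
        _ = u s := hus.symm
        _ ≤ 3 * cu * s ^ m := hsu2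
    have h3 : 3 * cu * s ^ m ≤ cu * (3*s) ^ m := by
      rw [mul_pow]
      calc 3 * cu * s ^ m = 3 * (cu * s ^ m) := by ring
        _ ≤ 3 ^ m * (cu * s ^ m) :=
            mul_le_mul_of_nonneg_right h9 (mul_nonneg hcu.le (pow_nonneg hs0.le m))
        _ = cu * (3 ^ m * s ^ m) := by ring
    have h4 := le_of_mul_le_mul_left (by linarith : cu * t ^ m ≤ cu * (3*s) ^ m) hcu
    exact le_of_pow_le_pow_left₀ (by omega) (by positivity) h4
  have hwn : iteratedDerivWithin n (fun s => u s - v s) (Set.Ico (0:ℝ) 1) t =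
      iteratedDerivWithin n u (Set.Ico (0:ℝ) 1) t
        - iteratedDerivWithin n u (Set.Ico (0:ℝ) 1) s := by
    have h1 : iteratedDerivWithin n (fun x => u x - v x) (Set.Ico (0:ℝ) 1) t =
        iteratedDerivWithin n u (Set.Ico (0:ℝ) 1) t
          - iteratedDerivWithin n v (Set.Ico (0:ℝ) 1) t :=
      iteratedDerivWithin_sub htI hI ((hu.of_le (by exact_mod_cast le_top)) t htI) ((hv.of_le (by exact_mod_cast le_top)) t htI)
    rw [h1, hueq t htI, hveq t htI, ← hus, ← hueq s hsI]
  rw [hwn]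
  have hvts : |u t - v t| = |u t - u s| := by rw [hus]
  rw [hvts]
  rcases eq_or_ne s t with heq | hne
  · rw [heq]
    simp
  have mvt : ∀ (g g' : ℝ → ℝ), ContinuousOn g (Set.Ico (0:ℝ) 1) →
      (∀ x ∈ Set.Ioo (0:ℝ) 1, HasDerivAt g (g' x) x) →
      ∀ x y : ℝ, x ∈ Set.Ioo (0:ℝ) 1 → y ∈ Set.Ioo (0:ℝ) 1 → x < y →
      ∃ ξ ∈ Set.Ioo x y, g y - g x = g' ξ * (y - x) := by
    intro g g' hgc hgd x y hx hy hxy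
    have hIcc : Set.Icc x y ⊆ Set.Ico (0:ℝ) 1 :=
      fun z hz => ⟨le_trans hx.1.le hz.1, lt_of_le_of_lt hz.2 hy.2⟩
    obtain ⟨ξ, hξ, he⟩ := exists_hasDerivAt_eq_slope g g' hxy (hgc.mono hIcc)
      (fun z hz => hgd z ⟨lt_trans hx.1 hz.1, lt_trans hz.2 hy.2⟩)
    refine ⟨ξ, hξ, ?_⟩
    rw [he, div_mul_cancel₀ _ (sub_ne_zero.mpr hxy.ne')]
  have contn : ContinuousOn (iteratedDerivWithin n u (Set.Ico (0:ℝ) 1)) (Set.Ico (0:ℝ) 1) :=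
    hu.continuousOn_iteratedDerivWithin (by exact_mod_cast le_top) hI
  have derivu : ∀ x ∈ Set.Ioo (0:ℝ) 1,
      HasDerivAt u (iteratedDerivWithin 1 u (Set.Ico (0:ℝ) 1) x) x := by
    intro x hx
    have h := dsi_hasDerivAt hu 0 x hx
    simpa using h
  have hEx : ∃ ξ η : ℝ, (0 < ξ ∧ ξ ≤ 3*t ∧ ξ ∈ Set.Icc (0:ℝ) δ₁) ∧
      (t/3 ≤ η ∧ η ∈ Set.Icc (0:ℝ) δ₁) ∧
      |iteratedDerivWithin n u (Set.Ico (0:ℝ) 1) t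
        - iteratedDerivWithin n u (Set.Ico (0:ℝ) 1) s| =
        |iteratedDerivWithin (n+1) u (Set.Ico (0:ℝ) 1) ξ| * |t - s| ∧
      |u t - u s| = |iteratedDerivWithin 1 u (Set.Ico (0:ℝ) 1) η| * |t - s| := by
    rcases lt_or_gt_of_ne hne with hlt | hgt
    · obtain ⟨ξ, hξ, he⟩ := mvt _ _ contn (dsi_hasDerivAt hu n) s t hsIoo htIoo hlt
      obtain ⟨η, hη, he2⟩ := mvt u _ hu.continuousOn derivu s t hsIoo htIoo hlt
      refine ⟨ξ, η,
        ⟨lt_trans hs0 hξ.1, by linarith [hξ.2], ⟨by linarith [hξ.1], by linarith [hξ.2, htδ₁.2]⟩⟩,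
        ⟨by linarith [hη.1, hts], ⟨by linarith [hη.1], by linarith [hη.2, htδ₁.2]⟩⟩, ?_, ?_⟩
      · rw [he, abs_mul]
      · rw [he2, abs_mul]
    · obtain ⟨ξ, hξ, he⟩ := mvt _ _ contn (dsi_hasDerivAt hu n) t s htIoo hsIoo hgt
      obtain ⟨η, hη, he2⟩ := mvt u _ hu.continuousOn derivu t s htIoo hsIoo hgt
      refine ⟨ξ, η,
        ⟨lt_trans ht0 hξ.1, by linarith [hξ.2, hst], ⟨by linarith [hξ.1], by linarith [hξ.2, hsIcc.2]⟩⟩,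
        ⟨by linarith [hη.1], ⟨by linarith [hη.1], by linarith [hη.2, hsIcc.2]⟩⟩, ?_, ?_⟩
      · rw [abs_sub_comm, he, abs_mul, abs_sub_comm s t]
      · rw [abs_sub_comm, he2, abs_mul, abs_sub_comm s t]
  obtain ⟨ξ, η, ⟨hξ0, hξ3, hξIcc⟩, ⟨hηt, hηIcc⟩, heq1, heq2⟩ := hEx
  have hB : (0:ℝ) ≤ |t - s| := abs_nonneg _
  have hAM : (0:ℝ) < a + M := by linarith
  have h1 : |iteratedDerivWithin (n+1) u (Set.Ico (0:ℝ) 1) ξ| ≤ (a+M) * (3*t) ^ (m-n-1) :=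
    (hDn1 ξ hξIcc).trans
      (mul_le_mul_of_nonneg_left (pow_le_pow_left₀ hξ0.le hξ3 _) hAM.le)
  have hD1η : cu * (t/3) ^ (m-1) ≤ iteratedDerivWithin 1 u (Set.Ico (0:ℝ) 1) η :=
    le_trans (mul_le_mul_of_nonneg_left (pow_le_pow_left₀ (by positivity) hηt _) hcu.le)
      (hu1 η hηIcc)
  have hD1pos : 0 < iteratedDerivWithin 1 u (Set.Ico (0:ℝ) 1) η :=
    lt_of_lt_of_le (mul_pos hcu (pow_pos (by positivity) (m-1))) hD1η
  have h2 : cu * (t/3) ^ (m-1) * |t - s| ≤ |u t - u s| := by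
    rw [heq2, abs_of_pos hD1pos]
    exact mul_le_mul_of_nonneg_right hD1η hB
  rw [le_div_iff₀ (pow_pos ht0 n)]
  have e1 : C * (cu * (t/3) ^ (m-1) * |t - s|) = (a+M) * 3 ^ (m-n-1) * t ^ (m-1) * |t - s| := by
    rw [hCdef, div_pow]
    field_simp
  have e3 : t ^ (m-n-1) * t ^ n ≤ t ^ (m-1) := by
    rw [← pow_add]
    exact pow_le_pow_of_le_one ht0.le ht1 (by omega)
  calc |iteratedDerivWithin n u (Set.Ico (0:ℝ) 1) t
        - iteratedDerivWithin n u (Set.Ico (0:ℝ) 1) s| * t ^ n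
      = |iteratedDerivWithin (n+1) u (Set.Ico (0:ℝ) 1) ξ| * |t - s| * t ^ n := by rw [heq1]
    _ ≤ ((a+M) * (3*t) ^ (m-n-1)) * |t - s| * t ^ n :=
        mul_le_mul_of_nonneg_right (mul_le_mul_of_nonneg_right h1 hB) (pow_nonneg ht0.le n)
    _ = ((a+M) * 3 ^ (m-n-1)) * (t ^ (m-n-1) * t ^ n) * |t - s| := by rw [mul_pow]; ring
    _ ≤ ((a+M) * 3 ^ (m-n-1)) * t ^ (m-1) * |t - s| := by
        have hnn : (0:ℝ) ≤ (a+M) * 3 ^ (m-n-1) := by positivity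
        exact mul_le_mul_of_nonneg_right (mul_le_mul_of_nonneg_left e3 hnn) hB
    _ = C * (cu * (t/3) ^ (m-1) * |t - s|) := by rw [e1]
    _ ≤ C * |u t - u s| := mul_le_mul_of_nonneg_left h2 hC.le
end

section
/- Let $n \geq 1$ and $m > n$ be integers, and let $u, v \in C^{\infty}([0,1))$ both satisfy $w(0) = w'(0) = \cdots = w^{(m-1)}(0) = 0$ and $w^{(m)}(0) = a > 0$. Then there exist constants $C > 0$ and $\delta > 0$ such that for all $t \in (0,\delta)$, both $u(t) > 0$ and $v(t) > 0$, and $\left| u(t)^{(m-n)/m} - v(t)^{(m-n)/m} \right| \leq C \, \frac{|u(t) - v(t)|}{t^{n}}$. -/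
private lemma myIteratedDerivWithin_congr_set {f : ℝ → ℝ} {s t : Set ℝ} {x : ℝ}
    (h : s =ᶠ[nhds x] t) (k : ℕ) :
    iteratedDerivWithin k f s x = iteratedDerivWithin k f t x := by
  simp only [iteratedDerivWithin, iteratedFDerivWithin_congr_set h]

/-- Sets `Icc 0 t` and `Ico 0 1` coincide near `0` (for `0 < t < 1`). -/
private lemma eqOn_near_zero {t : ℝ} (ht : 0 < t) (ht1 : t < 1) :
    (Set.Icc (0 : ℝ) t) =ᶠ[nhds 0] (Set.Ico (0 : ℝ) 1) := by
  have hmem : Set.Ioo (-t) t ∈ nhds (0 : ℝ) := Ioo_mem_nhds (by linarith) ht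
  filter_upwards [hmem] with x hx
  simp only [Set.mem_Icc, Set.mem_Ico, eq_iff_iff]
  constructor
  · rintro ⟨h1, h2⟩; exact ⟨h1, by linarith⟩
  · rintro ⟨h1, _⟩; exact ⟨h1, le_of_lt hx.2⟩

/-- Main positivity/lower-bound lemma: `w t ≥ a/(2·m!) · tᵐ` for small `t`. -/
private lemma lower_bound_lemma (m : ℕ) (hm1 : 1 ≤ m) (a : ℝ) (ha : 0 < a) (w : ℝ → ℝ)
    (hw : ContDiffOn ℝ (⊤ : ℕ∞) w (Set.Ico (0 : ℝ) 1))
    (hw0 : ∀ k < m, iteratedDerivWithin k w (Set.Ico (0 : ℝ) 1) 0 = 0)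
    (hwm : iteratedDerivWithin m w (Set.Ico (0 : ℝ) 1) 0 = a) :
    ∃ δ, 0 < δ ∧ δ < 1 ∧ ∀ t ∈ Set.Ioo (0 : ℝ) δ,
      a / (2 * m.factorial) * t ^ m ≤ w t := by
  have uds : UniqueDiffOn ℝ (Set.Ico (0 : ℝ) 1) := uniqueDiffOn_Ico 0 1
  set g := iteratedDerivWithin m w (Set.Ico (0 : ℝ) 1) with hg
  have hgc : ContinuousOn g (Set.Ico (0 : ℝ) 1) :=
    hw.continuousOn_iteratedDerivWithin (by exact_mod_cast le_top) uds
  have h0mem : (0 : ℝ) ∈ Set.Ico (0 : ℝ) 1 := ⟨le_refl 0, zero_lt_one⟩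
  have hcw : ContinuousWithinAt g (Set.Ico (0 : ℝ) 1) 0 := hgc 0 h0mem
  have hev : ∀ᶠ x in nhdsWithin 0 (Set.Ico (0 : ℝ) 1), a / 2 < g x := by
    apply hcw.eventually
    rw [hwm]
    exact eventually_gt_nhds (by linarith)
  obtain ⟨ε, hε, hball⟩ := Metric.mem_nhdsWithin_iff.mp hev
  refine ⟨min ε (1 / 2), lt_min hε (by norm_num), lt_of_le_of_lt (min_le_right _ _) (by norm_num),
    ?_⟩
  rintro t ⟨ht0, htδ⟩
  have htε : t < ε := lt_of_lt_of_le htδ (min_le_left _ _)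
  have ht1 : t < 1 := lt_trans (lt_of_lt_of_le htδ (min_le_right _ _)) (by norm_num)
  -- Taylor expansion on Icc 0 t
  have hIccsub : Set.Icc (0 : ℝ) t ⊆ Set.Ico (0 : ℝ) 1 := fun x hx =>
    ⟨hx.1, lt_of_le_of_lt hx.2 ht1⟩
  have hwIcc : ContDiffOn ℝ (m : WithTop ℕ∞) w (Set.Icc (0 : ℝ) t) :=
    (hw.mono hIccsub).of_le (by exact_mod_cast le_top)
  have hm1' : m - 1 + 1 = m := Nat.succ_pred_eq_of_pos hm1
  have hdiff : DifferentiableOn ℝ (iteratedDerivWithin (m - 1) w (Set.Icc (0 : ℝ) t))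
      (Set.Ioo (0 : ℝ) t) := by
    have := hwIcc.differentiableOn_iteratedDerivWithin (m := m - 1)
      (Nat.cast_lt.mpr (by omega))
      (uniqueDiffOn_Icc ht0)
    exact this.mono Set.Ioo_subset_Icc_self
  obtain ⟨x', hx', htaylor⟩ := taylor_mean_remainder_lagrange (n := m - 1) (ne_of_lt ht0)
    (by rw [Set.uIcc_of_le ht0.le]; exact hwIcc.of_le (Nat.cast_le.mpr (Nat.sub_le m 1)))
    (by rw [Set.uIcc_of_le ht0.le, Set.uIoo_of_le ht0.le]; exact hdiff)
  rw [Set.uIoo_of_le ht0.le] at hx'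
  rw [Set.uIcc_of_le ht0.le] at htaylor
  have heq0 : taylorWithinEval w (m - 1) (Set.Icc (0 : ℝ) t) 0 t = 0 := by
    rw [taylor_within_apply]
    apply Finset.sum_eq_zero
    intro k hk
    have hkm : k < m := by
      have := Finset.mem_range.mp hk; omega
    have : iteratedDerivWithin k w (Set.Icc (0 : ℝ) t) 0 =
        iteratedDerivWithin k w (Set.Ico (0 : ℝ) 1) 0 :=
      myIteratedDerivWithin_congr_set (eqOn_near_zero ht0 ht1) k
    rw [this, hw0 k hkm, smul_zero]
  have hx'eq : iteratedDerivWithin (m - 1 + 1) w (Set.Icc (0 : ℝ) t) x' = g x' := by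
    rw [hm1']
    apply myIteratedDerivWithin_congr_set
    have hmem : Set.Ioo (0 : ℝ) t ∈ nhds x' := Ioo_mem_nhds hx'.1 hx'.2
    filter_upwards [hmem] with y hy
    simp only [Set.mem_Icc, Set.mem_Ico, eq_iff_iff]
    constructor
    · rintro ⟨h1, h2⟩; exact ⟨h1, by linarith⟩
    · rintro _; exact ⟨le_of_lt hy.1, le_of_lt hy.2⟩
  have hgx' : a / 2 < g x' := hball ⟨by
      rw [Metric.mem_ball, Real.dist_eq, sub_zero, abs_of_pos hx'.1]
      exact lt_trans hx'.2 htε,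
    ⟨le_of_lt hx'.1, lt_trans hx'.2 ht1⟩⟩
  rw [heq0, sub_zero, sub_zero, hx'eq, hm1'] at htaylor
  rw [htaylor]
  have hfac : (0 : ℝ) < (m.factorial : ℝ) := by exact_mod_cast Nat.factorial_pos m
  have htm : (0 : ℝ) ≤ t ^ m := le_of_lt (pow_pos ht0 m)
  have heq : a / (2 * m.factorial) * t ^ m = (a / 2) * t ^ m / m.factorial := by
    field_simp
  rw [heq]
  gcongr

/-- Mean value inequality for `x ↦ x^α`, `0 < α ≤ 1`. -/
private lemma rpow_sub_le_mvt {x y α : ℝ} (hx : 0 < x) (hxy : x ≤ y) (hα : 0 < α)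
    (hα1 : α ≤ 1) : y ^ α - x ^ α ≤ α * x ^ (α - 1) * (y - x) := by
  rcases eq_or_lt_of_le hxy with rfl | hlt
  · simp
  · have hcont : ContinuousOn (fun z : ℝ => z ^ α) (Set.Icc x y) := by
      apply ContinuousOn.rpow_const continuousOn_id
      intro z hz
      exact Or.inl (ne_of_gt (lt_of_lt_of_le hx hz.1))
    have hderiv : ∀ z ∈ Set.Ioo x y,
        HasDerivAt (fun z : ℝ => z ^ α) (α * z ^ (α - 1)) z := by
      intro z hz
      have hz0 : z ≠ 0 := ne_of_gt (lt_trans hx hz.1)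
      exact Real.hasDerivAt_rpow_const (Or.inl hz0)
    obtain ⟨c, hc, hceq⟩ := exists_hasDerivAt_eq_slope (fun z : ℝ => z ^ α)
      (fun z => α * z ^ (α - 1)) hlt hcont hderiv
    have hcx : x ≤ c := le_of_lt hc.1
    have hcbound : c ^ (α - 1) ≤ x ^ (α - 1) :=
      Real.rpow_le_rpow_of_nonpos hx hcx (by linarith)
    have : y ^ α - x ^ α = α * c ^ (α - 1) * (y - x) := by
      rw [hceq, div_mul_cancel₀ _ (ne_of_gt (sub_pos.mpr hlt))]
    rw [this]
    apply mul_le_mul_of_nonneg_right _ (by linarith)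
    exact mul_le_mul_of_nonneg_left hcbound (le_of_lt hα)

/-- **Mean value estimate for fractional powers of two solutions.**
If `u, v` are smooth on `[0, 1)` with `w(0) = ⋯ = w⁽ᵐ⁻¹⁾(0) = 0`, `w⁽ᵐ⁾(0) = a > 0`,
where `m > n ≥ 1`, then for small `t > 0` both are positive and
`|u(t)^((m-n)/m) - v(t)^((m-n)/m)| ≤ C |u(t) - v(t)| / tⁿ`. -/
theorem fractional_power_difference_estimate
    (n m : ℕ) (hn : 1 ≤ n) (hm : n < m) (a : ℝ) (ha : 0 < a)
    (u v : ℝ → ℝ)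
    (hu : ContDiffOn ℝ (⊤ : ℕ∞) u (Set.Ico (0 : ℝ) 1))
    (hv : ContDiffOn ℝ (⊤ : ℕ∞) v (Set.Ico (0 : ℝ) 1))
    (hu0 : ∀ k < m, iteratedDerivWithin k u (Set.Ico (0 : ℝ) 1) 0 = 0)
    (hum : iteratedDerivWithin m u (Set.Ico (0 : ℝ) 1) 0 = a)
    (hv0 : ∀ k < m, iteratedDerivWithin k v (Set.Ico (0 : ℝ) 1) 0 = 0)
    (hvm : iteratedDerivWithin m v (Set.Ico (0 : ℝ) 1) 0 = a) :
    ∃ C > (0 : ℝ), ∃ δ > (0 : ℝ), ∀ t ∈ Set.Ioo (0 : ℝ) δ,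
      0 < u t ∧ 0 < v t ∧
      |u t ^ (((m : ℝ) - n) / m) - v t ^ (((m : ℝ) - n) / m)| ≤
        C * |u t - v t| / t ^ n := by
  have hm1 : 1 ≤ m := le_trans hn (le_of_lt hm)
  obtain ⟨δu, hδu0, hδu1, hub⟩ := lower_bound_lemma m hm1 a ha u hu hu0 hum
  obtain ⟨δv, hδv0, hδv1, hvb⟩ := lower_bound_lemma m hm1 a ha v hv hv0 hvm
  set α : ℝ := (((m : ℝ) - n) / m) with hα
  have hmpos : (0 : ℝ) < m := by exact_mod_cast Nat.lt_of_lt_of_le Nat.zero_lt_one hm1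
  have hnpos : (0 : ℝ) < n := by exact_mod_cast hn
  have hnm : (n : ℝ) < m := by exact_mod_cast hm
  have hαpos : 0 < α := div_pos (by linarith) hmpos
  have hα1 : α ≤ 1 := by
    rw [hα, div_le_one hmpos]; linarith
  set c₁ : ℝ := a / (2 * m.factorial) with hc₁
  have hc₁pos : 0 < c₁ := by
    have : (0 : ℝ) < (m.factorial : ℝ) := by exact_mod_cast Nat.factorial_pos m
    positivity
  refine ⟨α * c₁ ^ (α - 1), by positivity, min δu δv, lt_min hδu0 hδv0, ?_⟩
  rintro t ⟨ht0, htδ⟩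
  have htu : t ∈ Set.Ioo (0 : ℝ) δu := ⟨ht0, lt_of_lt_of_le htδ (min_le_left _ _)⟩
  have htv : t ∈ Set.Ioo (0 : ℝ) δv := ⟨ht0, lt_of_lt_of_le htδ (min_le_right _ _)⟩
  have hul : c₁ * t ^ m ≤ u t := hub t htu
  have hvl : c₁ * t ^ m ≤ v t := hvb t htv
  have htm : (0 : ℝ) < t ^ m := pow_pos ht0 m
  have hulpos : 0 < u t := lt_of_lt_of_le (by positivity) hul
  have hvlpos : 0 < v t := lt_of_lt_of_le (by positivity) hvl
  refine ⟨hulpos, hvlpos, ?_⟩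
  -- key exponent computation : (c₁ t^m)^(α-1) = c₁^(α-1) / t^n
  have hbase : (0 : ℝ) < c₁ * t ^ m := by positivity
  have hexp : ((c₁ * t ^ m) : ℝ) ^ (α - 1) = c₁ ^ (α - 1) / t ^ n := by
    rw [Real.mul_rpow (le_of_lt hc₁pos) (le_of_lt htm)]
    congr 1
    rw [← Real.rpow_natCast t m, ← Real.rpow_natCast t n,
      ← Real.rpow_mul (le_of_lt ht0)]
    rw [Real.rpow_def_of_pos ht0, Real.rpow_def_of_pos ht0, ← Real.exp_neg, ← mul_neg]
    congr 1
    have : α - 1 = -(n : ℝ) / m := by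
      rw [hα]; field_simp; ring
    rw [this]
    field_simp
  -- key claim for ordered pair
  have key : ∀ x y : ℝ, c₁ * t ^ m ≤ x → c₁ * t ^ m ≤ y → x ≤ y →
      y ^ α - x ^ α ≤ α * c₁ ^ (α - 1) * (y - x) / t ^ n := by
    intro x y hxl hyl hxy
    have hxpos : 0 < x := lt_of_lt_of_le hbase hxl
    have h1 : y ^ α - x ^ α ≤ α * x ^ (α - 1) * (y - x) :=
      rpow_sub_le_mvt hxpos hxy hαpos hα1
    have h2 : x ^ (α - 1) ≤ (c₁ * t ^ m) ^ (α - 1) :=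
      Real.rpow_le_rpow_of_nonpos hbase hxl (by linarith)
    calc y ^ α - x ^ α ≤ α * x ^ (α - 1) * (y - x) := h1
      _ ≤ α * ((c₁ * t ^ m) ^ (α - 1)) * (y - x) := by
          apply mul_le_mul_of_nonneg_right _ (by linarith)
          exact mul_le_mul_of_nonneg_left h2 (le_of_lt hαpos)
      _ = α * c₁ ^ (α - 1) * (y - x) / t ^ n := by
          rw [hexp]; ring
  rcases le_total (u t) (v t) with hle | hle
  · have := key (u t) (v t) hul hvl hle
    rw [abs_sub_comm, abs_of_nonneg (by
      have := Real.rpow_le_rpow (le_of_lt hulpos) hle (le_of_lt hαpos); linarith),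
      abs_sub_comm, abs_of_nonneg (by linarith)]
    exact this
  · have := key (v t) (u t) hvl hul hle
    rw [abs_of_nonneg (by
      have := Real.rpow_le_rpow (le_of_lt hvlpos) hle (le_of_lt hαpos); linarith),
      abs_of_nonneg (by linarith)]
    exact this
end

section
/- Let $k \geq 1$ be an integer, let $a < b$ be real numbers, and let $g \in C^{k+1}([a,b])$. Define $h : [a,b] \to \mathbb{R}$ by $h(a) = 0$ and, for $x \in (a,b]$, $h(x) = \frac{g(x) - \sum_{j=0}^{k} \frac{g^{(j)}(a)}{j!}(x-a)^{j}}{(x-a)^{k}}$. Then $h$ is continuously differentiable on $[a,b]$ (with a one-sided derivative at $a$), and $h'(a) = \frac{g^{(k+1)}(a)}{(k+1)!}$; moreover $\lim_{x \to a^{+}} h'(x) = \frac{g^{(k+1)}(a)}{(k+1)!}$. -/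
/-! Write `Pₙ` for the Taylor polynomial of `g` at `a` and `c = g⁽ᵏ⁺¹⁾(a)/(k+1)!`. For `x > a`,
`h x = (g x - Pₖ₊₁ x)/(x - a)ᵏ + c (x - a)`. By Peano's form of Taylor's theorem the quotients
`(g - Pₖ₊₁)/(x - a)ᵏ⁺¹` and `(g' - Pₖ(g'))/(x - a)ᵏ` tend to `0` at `a⁺`. The first gives the slope
of `h` at `a`; since `(Pₖ₊₁)' = Pₖ(g')`, the quotient rule writes `h'(x)` as
`(g' - Pₖ(g'))/(x - a)ᵏ - k (g - Pₖ₊₁)/(x - a)ᵏ⁺¹ + c`, which therefore tends to `c`. -/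

open Set Filter Topology

theorem taylorWithinEval_eq_sum (f : ℝ → ℝ) (n : ℕ) (s : Set ℝ) (a x : ℝ) :
    taylorWithinEval f n s a x = ∑ j ∈ Finset.range (n + 1),
      iteratedDerivWithin j f s a / (j.factorial : ℝ) * (x - a) ^ j := by
  rw [taylor_within_apply]
  refine Finset.sum_congr rfl fun j _ => ?_
  rw [smul_eq_mul]
  ring

theorem taylorCoeffWithin_eq_div (f : ℝ → ℝ) (n : ℕ) (s : Set ℝ) (a : ℝ) :
    taylorCoeffWithin f n s a = iteratedDerivWithin n f s a / (n.factorial : ℝ) := by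
  rw [taylorCoeffWithin, smul_eq_mul, inv_mul_eq_div]

theorem taylorWithinEval_succ_eq_add (f : ℝ → ℝ) (n : ℕ) (s : Set ℝ) (a x : ℝ) :
    taylorWithinEval f (n + 1) s a x =
      taylorWithinEval f n s a x + taylorCoeffWithin f (n + 1) s a * (x - a) ^ (n + 1) := by
  rw [taylorWithinEval_succ, taylorCoeffWithin_eq_div, Nat.factorial_succ, smul_eq_mul]
  push_cast
  ring

theorem continuous_taylorWithinEval (f : ℝ → ℝ) (n : ℕ) (s : Set ℝ) (a : ℝ) :
    Continuous (taylorWithinEval f n s a) := by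
  simp_rw [funext (taylorWithinEval_eq_sum f n s a)]
  fun_prop

theorem HasDerivWithinAt.div_sub_pow {f : ℝ → ℝ} {f' a x : ℝ} {s : Set ℝ} (n : ℕ)
    (hf : HasDerivWithinAt f f' s x) (hx : x ≠ a) :
    HasDerivWithinAt (fun y => f y / (y - a) ^ n)
      (f' / (x - a) ^ n - n * (f x / (x - a) ^ (n + 1))) s x := by
  have hxa : x - a ≠ 0 := sub_ne_zero.2 hx
  have hpow : HasDerivWithinAt (fun y => (y - a) ^ n) (n * (x - a) ^ (n - 1)) s x := by
    simpa using (((hasDerivAt_id x).sub_const a).fun_pow n).hasDerivWithinAt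
  refine (hf.fun_div hpow (pow_ne_zero n hxa)).congr_deriv ?_
  cases n with
  | zero => simp
  | succ m =>
    simp only [Nat.add_sub_cancel]
    field_simp
    ring

/-- At `x = a` this is the junk value `0 / 0 ^ n = 0`, which is the value the theorem prescribes
for `h a`. -/
noncomputable def taylorQuotient (f : ℝ → ℝ) (n : ℕ) (s : Set ℝ) (a x : ℝ) : ℝ :=
  (f x - taylorWithinEval f n s a x) / (x - a) ^ n

section TaylorQuotient

variable {f : ℝ → ℝ} {n : ℕ} {s : Set ℝ} {a x : ℝ}

theorem taylorQuotient_self : taylorQuotient f n s a a = 0 := by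
  simp [taylorQuotient]

theorem taylorQuotient_eq_succ_add (hx : x ≠ a) :
    taylorQuotient f n s a x = (f x - taylorWithinEval f (n + 1) s a x) / (x - a) ^ n +
      taylorCoeffWithin f (n + 1) s a * (x - a) := by
  rw [taylorQuotient, taylorWithinEval_succ_eq_add]
  field_simp [sub_ne_zero.2 hx]
  ring

theorem slope_taylorQuotient_self (hx : x ≠ a) :
    slope (taylorQuotient f n s a) a x =
      taylorQuotient f (n + 1) s a x + taylorCoeffWithin f (n + 1) s a := by
  rw [slope_def_field, taylorQuotient_self, sub_zero, taylorQuotient_eq_succ_add hx,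
    taylorQuotient, pow_succ]
  field_simp [sub_ne_zero.2 hx]

theorem tendsto_taylorQuotient (hs : Convex ℝ s) (ha : a ∈ s) (hf : ContDiffOn ℝ n f s) :
    Tendsto (taylorQuotient f n s a) (𝓝[s] a) (𝓝 0) :=
  Real.taylor_tendsto hs ha hf

theorem continuousOn_taylorQuotient (hf : ContinuousOn f s) :
    ContinuousOn (taylorQuotient f n s a) (s \ {a}) :=
  ((hf.mono sdiff_subset).sub (continuous_taylorWithinEval f n s a).continuousOn).div
    (by fun_prop) fun _ hx => pow_ne_zero n (sub_ne_zero.2 hx.2)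

theorem hasDerivWithinAt_taylorQuotient (hf : DifferentiableWithinAt ℝ f s x) (hx : x ≠ a) :
    HasDerivWithinAt (taylorQuotient f n s a)
      (taylorQuotient (derivWithin f s) n s a x - n * taylorQuotient f (n + 1) s a x +
        taylorCoeffWithin f (n + 1) s a) s x := by
  have hR : HasDerivWithinAt (fun y => f y - taylorWithinEval f (n + 1) s a y)
      (derivWithin f s x - taylorWithinEval (derivWithin f s) n s a x) s x :=
    hf.hasDerivWithinAt.sub (hasDerivAt_taylorWithinEval_succ f n).hasDerivWithinAt
  have := (hR.div_sub_pow n hx).add (((hasDerivWithinAt_id x s).sub_const a).const_mul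
    (taylorCoeffWithin f (n + 1) s a))
  refine (this.congr_deriv (by simp [taylorQuotient])).congr_of_eventuallyEq ?_
    (taylorQuotient_eq_succ_add hx)
  filter_upwards [mem_nhdsWithin_of_mem_nhds (compl_singleton_mem_nhds hx)] with y hy
  exact taylorQuotient_eq_succ_add hy

theorem hasDerivWithinAt_taylorQuotient_self (hs : Convex ℝ s) (ha : a ∈ s)
    (hf : ContDiffOn ℝ (n + 1) f s) :
    HasDerivWithinAt (taylorQuotient f n s a) (taylorCoeffWithin f (n + 1) s a) s a := by
  rw [hasDerivWithinAt_iff_tendsto_slope]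
  have : Tendsto (fun x => taylorQuotient f (n + 1) s a x + taylorCoeffWithin f (n + 1) s a)
      (𝓝[s \ {a}] a) (𝓝 (0 + taylorCoeffWithin f (n + 1) s a)) :=
    ((tendsto_taylorQuotient hs ha (by exact_mod_cast hf)).add_const _).mono_left
      (nhdsWithin_mono a sdiff_subset)
  rw [zero_add] at this
  exact this.congr' (eventually_mem_nhdsWithin.mono fun x hx =>
    (slope_taylorQuotient_self hx.2).symm)

theorem derivWithin_taylorQuotient (hs : UniqueDiffOn ℝ s) (hf : ContDiffOn ℝ (n + 1) f s)
    (hx : x ∈ s \ {a}) :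
    derivWithin (taylorQuotient f n s a) s x =
      taylorQuotient (derivWithin f s) n s a x - n * taylorQuotient f (n + 1) s a x +
        taylorCoeffWithin f (n + 1) s a :=
  (hasDerivWithinAt_taylorQuotient (hf.differentiableOn (by simp) x hx.1) hx.2).derivWithin
    (hs x hx.1)

theorem tendsto_derivWithin_taylorQuotient (hs : Convex ℝ s) (hs' : UniqueDiffOn ℝ s)
    (ha : a ∈ s) (hf : ContDiffOn ℝ (n + 1) f s) :
    Tendsto (derivWithin (taylorQuotient f n s a) s) (𝓝[s \ {a}] a)
      (𝓝 (taylorCoeffWithin f (n + 1) s a)) := by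
  have hq' : Tendsto (taylorQuotient (derivWithin f s) n s a) (𝓝[s] a) (𝓝 0) :=
    tendsto_taylorQuotient hs ha (hf.derivWithin hs' le_rfl)
  have hq : Tendsto (taylorQuotient f (n + 1) s a) (𝓝[s] a) (𝓝 0) :=
    tendsto_taylorQuotient hs ha (by exact_mod_cast hf)
  have := ((hq'.sub (hq.const_mul (n : ℝ))).add_const
    (taylorCoeffWithin f (n + 1) s a)).mono_left (nhdsWithin_mono a (sdiff_subset (t := {a})))
  simp only [mul_zero, sub_zero, zero_add] at this
  exact this.congr' (eventually_mem_nhdsWithin.mono fun x hx =>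
    (derivWithin_taylorQuotient hs' hf hx).symm)

theorem continuousOn_derivWithin_taylorQuotient (hs : UniqueDiffOn ℝ s)
    (hf : ContDiffOn ℝ (n + 1) f s) :
    ContinuousOn (derivWithin (taylorQuotient f n s a) s) (s \ {a}) := by
  have hq' := continuousOn_taylorQuotient (n := n) (a := a)
    (hf.continuousOn_derivWithin hs le_add_self)
  have hq := continuousOn_taylorQuotient (n := n + 1) (a := a) hf.continuousOn
  exact ((hq'.sub (hq.const_smul (n : ℝ))).add continuousOn_const).congr fun x hx =>
    derivWithin_taylorQuotient hs hf hx

theorem contDiffOn_taylorQuotient (hs : Convex ℝ s) (hs' : UniqueDiffOn ℝ s) (ha : a ∈ s)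
    (hf : ContDiffOn ℝ (n + 1) f s) :
    ContDiffOn ℝ 1 (taylorQuotient f n s a) s := by
  have hda := hasDerivWithinAt_taylorQuotient_self hs ha hf
  rw [show (1 : WithTop ℕ∞) = 0 + 1 from rfl, contDiffOn_succ_iff_derivWithin hs',
    contDiffOn_zero]
  refine ⟨fun x hx => ?_, by simp, fun x hx => ?_⟩ <;> obtain rfl | hxa := eq_or_ne x a
  · exact hda.differentiableWithinAt
  · exact (hasDerivWithinAt_taylorQuotient (hf.differentiableOn (by simp) x hx) hxa)
      |>.differentiableWithinAt
  · rw [← continuousWithinAt_sdiff_self, ContinuousWithinAt, hda.derivWithin (hs' x hx)]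
    exact tendsto_derivWithin_taylorQuotient hs hs' hx hf
  · exact continuousWithinAt_sdiff_singleton.1
      (continuousOn_derivWithin_taylorQuotient hs' hf x ⟨hx, hxa⟩)

end TaylorQuotient

theorem taylor_remainder_quotient_C1_general
    (k : ℕ) (a b : ℝ) (hab : a < b)
    (g : ℝ → ℝ) (hg : ContDiffOn ℝ (k + 1) g (Set.Icc a b))
    (h : ℝ → ℝ) (hha : h a = 0)
    (hhx : ∀ x ∈ Set.Ioc a b,
      h x = (g x - ∑ j ∈ Finset.range (k + 1),
          iteratedDerivWithin j g (Set.Icc a b) a / (Nat.factorial j : ℝ) *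
            (x - a) ^ j) / (x - a) ^ k) :
    ContDiffOn ℝ 1 h (Set.Icc a b) ∧
    derivWithin h (Set.Icc a b) a =
      iteratedDerivWithin (k + 1) g (Set.Icc a b) a / (Nat.factorial (k + 1) : ℝ) ∧
    Filter.Tendsto (fun x => derivWithin h (Set.Icc a b) x)
      (nhdsWithin a (Set.Ioc a b))
      (nhds (iteratedDerivWithin (k + 1) g (Set.Icc a b) a /
        (Nat.factorial (k + 1) : ℝ))) := by
  have hs : UniqueDiffOn ℝ (Icc a b) := uniqueDiffOn_Icc hab
  have ha : a ∈ Icc a b := left_mem_Icc.2 hab.le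
  have heq : EqOn h (taylorQuotient g k (Icc a b) a) (Icc a b) := by
    rintro x ⟨hax, hxb⟩
    obtain rfl | hax := hax.eq_or_lt
    · rw [hha, taylorQuotient_self]
    · rw [hhx x ⟨hax, hxb⟩, taylorQuotient, taylorWithinEval_eq_sum]
  have hderiv : EqOn (derivWithin h (Icc a b))
      (derivWithin (taylorQuotient g k (Icc a b) a) (Icc a b)) (Icc a b) :=
    fun x hx => derivWithin_congr heq (heq hx)
  rw [← taylorCoeffWithin_eq_div, ← Icc_sdiff_left]
  refine ⟨(contDiffOn_taylorQuotient (convex_Icc a b) hs ha hg).congr heq,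
    (hderiv ha).trans ((hasDerivWithinAt_taylorQuotient_self (convex_Icc a b) ha hg).derivWithin
      (hs a ha)), ?_⟩
  exact (tendsto_derivWithin_taylorQuotient (convex_Icc a b) hs ha hg).congr'
    (eventually_mem_nhdsWithin.mono fun x hx => (hderiv hx.1).symm)

/-- **Regularity of the Taylor remainder quotient.**
If `g ∈ C^{k+1}([a, b])` and `h(x) = (g(x) - ∑_{j ≤ k} g⁽ʲ⁾(a)/j! (x-a)ʲ)/(x-a)ᵏ`
for `x ∈ (a, b]`, with `h(a) = 0`, then `h` is `C¹` on `[a, b]`, the (one-sided)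
derivative of `h` at `a` equals `g⁽ᵏ⁺¹⁾(a)/(k+1)!`, and `h'(x) → g⁽ᵏ⁺¹⁾(a)/(k+1)!`
as `x → a⁺`. -/
theorem taylor_remainder_quotient_C1
    (k : ℕ) (hk : 1 ≤ k) (a b : ℝ) (hab : a < b)
    (g : ℝ → ℝ) (hg : ContDiffOn ℝ (k + 1) g (Set.Icc a b))
    (h : ℝ → ℝ) (hha : h a = 0)
    (hhx : ∀ x ∈ Set.Ioc a b,
      h x = (g x - ∑ j ∈ Finset.range (k + 1),
          iteratedDerivWithin j g (Set.Icc a b) a / (Nat.factorial j : ℝ) *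
            (x - a) ^ j) / (x - a) ^ k) :
    ContDiffOn ℝ 1 h (Set.Icc a b) ∧
    derivWithin h (Set.Icc a b) a =
      iteratedDerivWithin (k + 1) g (Set.Icc a b) a / (Nat.factorial (k + 1) : ℝ) ∧
    Filter.Tendsto (fun x => derivWithin h (Set.Icc a b) x)
      (nhdsWithin a (Set.Ioc a b))
      (nhds (iteratedDerivWithin (k + 1) g (Set.Icc a b) a /
        (Nat.factorial (k + 1) : ℝ))) :=
  taylor_remainder_quotient_C1_general k a b hab g hg h hha hhx
end
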